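/- arXiv:2006.06440 — 13 statements merged into one kernel-verified Lean document; each statement's English description precedes it below -/
import Mathlib

section
/- Let X be a two-dimensional real Banach space and let Y be a real Banach space of dimension at least two. Let T : X → Y be a bounded linear operator such that there exist x, y ∈ M_T with x ≠ y, x ≠ −y, (x+y)/‖x+y‖ ∉ M_T and (x−y)/‖x−y‖ ∉ M_T. Then T does not satisfy the Bhatia–Šemrl property; that is, there exists a bounded linear operator A : X → Y with T ⊥_B A such that Tx is not Birkhoff–James orthogonal to Ax for any x ∈ M_T. -/
/-- Birkhoff–James orthogonality: `x ⊥_B y` iff `‖x + λ y‖ ≥ ‖x‖` for all real `λ`. -/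
def BJOrth {E : Type*} [NormedAddCommGroup E] [NormedSpace ℝ E] (x y : E) : Prop :=
  ∀ lam : ℝ, ‖x‖ ≤ ‖x + lam • y‖

/-- The norm attainment set of a bounded linear operator. -/
def normAttainSet {X Y : Type*} [NormedAddCommGroup X] [NormedSpace ℝ X]
    [NormedAddCommGroup Y] [NormedSpace ℝ Y] (T : X →L[ℝ] Y) : Set X :=
  {x | ‖x‖ = 1 ∧ ‖T x‖ = ‖T‖}

/-!
The parameters `t` for which `T` attains its norm at `(1 - t) x + t y` form a closed set that
contains `0` and `1` but not `1/2`, so it has a gap: there are norm attaining unit vectors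
`u, v` in the cone spanned by `x, y` such that no `a u + b v` with `a, b > 0` attains the norm.
Take `g` with `g x = g y = 1` and `A = g(·) (T v - T u)`. Evaluating `T + λ A` at `v` (for `λ ≥ 0`)
or at `u` (for `λ ≤ 0`) against a support functional shows `T ⊥_B A`. If `T z ⊥_B A z` for some
`z ∈ M_T`, then `g z ≠ 0` because `ker g` is spanned by `x - y`, so Hahn–Banach gives a norming
functional `ψ` of `T z` with `ψ (T u) = ψ (T v)`. Writing `z = a u + b v`, this forces either
`u + v` or `z` itself, with `a, b > 0`, to attain the norm.
-/

theorem IsClosed.exists_gap {E : Set ℝ} (hE : IsClosed E) {a b c : ℝ} (ha : a ∈ E) (hb : b ∈ E)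
    (hc : c ∉ E) (hac : a ≤ c) (hcb : c ≤ b) :
    ∃ t₁ ∈ E, ∃ t₂ ∈ E, t₁ < t₂ ∧ ∀ t ∈ Set.Ioo t₁ t₂, t ∉ E := by
  have hbdd₁ : BddAbove (E ∩ Set.Iic c) := bddAbove_Iic.mono Set.inter_subset_right
  have hbdd₂ : BddBelow (E ∩ Set.Ici c) := bddBelow_Ici.mono Set.inter_subset_right
  have h₁ := (hE.inter isClosed_Iic).csSup_mem ⟨a, ha, hac⟩ hbdd₁
  have h₂ := (hE.inter isClosed_Ici).csInf_mem ⟨b, hb, hcb⟩ hbdd₂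
  refine ⟨_, h₁.1, _, h₂.1, ?_, fun t ht htE => ?_⟩
  · exact (h₁.2.lt_of_ne (by rintro h; exact hc (h ▸ h₁.1))).trans
      (h₂.2.lt_of_ne' (by rintro h; exact hc (h ▸ h₂.1)))
  · rcases le_total t c with htc | htc
    · exact ht.1.not_ge (le_csSup hbdd₁ ⟨htE, htc⟩)
    · exact ht.2.not_ge (csInf_le hbdd₂ ⟨htE, htc⟩)

theorem LinearIndependent.exists_smul_add_smul_eq {K V : Type*} [DivisionRing K] [AddCommGroup V]
    [Module K V] {u v : V} (huv : LinearIndependent K ![u, v]) (hV : Module.finrank K V = 2)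
    (z : V) : ∃ a b : K, a • u + b • v = z := by
  have hspan := huv.span_eq_top_of_card_eq_finrank (by simp [hV])
  rw [Matrix.range_cons_cons_empty] at hspan
  exact Submodule.mem_span_pair.1 (hspan ▸ Submodule.mem_top)

theorem LinearIndependent.exists_dual_eq_one {X : Type*} [NormedAddCommGroup X] [NormedSpace ℝ X]
    {x y : X} (hxy : LinearIndependent ℝ ![x, y]) (hX : Module.finrank ℝ X = 2) :
    ∃ g : StrongDual ℝ X, g x = 1 ∧ g y = 1 := by
  have : FiniteDimensional ℝ X := .of_finrank_pos (by omega)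
  let B := basisOfLinearIndependentOfCardEqFinrank hxy (by simp [hX])
  refine ⟨LinearMap.toContinuousLinearMap (B.constr ℝ fun _ => 1), ?_, ?_⟩
  · simpa [B] using B.constr_basis ℝ (fun _ => (1 : ℝ)) 0
  · simpa [B] using B.constr_basis ℝ (fun _ => (1 : ℝ)) 1

theorem linearIndependent_pair_of_norm_eq_one {E : Type*} [NormedAddCommGroup E]
    [NormedSpace ℝ E] {x y : E} (hx : ‖x‖ = 1) (hy : ‖y‖ = 1) (hxy : x ≠ y) (hxy' : x ≠ -y) :
    LinearIndependent ℝ ![x, y] := by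
  refine (LinearIndependent.pair_iff' (ne_zero_of_norm_ne_zero (hx ▸ one_ne_zero))).2
    fun a hay => ?_
  have ha : |a| = 1 := by simpa [← hay, norm_smul, hx] using hy
  rcases (abs_eq zero_le_one).1 ha with rfl | rfl
  · exact hxy (by simpa using hay)
  · exact hxy' (by simp [← hay])

theorem AffineMap.smul_lineMap_add_smul_lineMap {V : Type*} [AddCommGroup V] [Module ℝ V]
    (x y : V) {a b : ℝ} (hab : a + b ≠ 0) (s t : ℝ) :
    a • lineMap x y s + b • lineMap x y t = (a + b) • lineMap x y ((a * s + b * t) / (a + b)) := by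
  simp only [lineMap_apply_module]
  match_scalars <;> field_simp; ring

theorem StrongDual.apply_le_norm {E : Type*} [NormedAddCommGroup E] [NormedSpace ℝ E]
    {ψ : StrongDual ℝ E} (hψ : ‖ψ‖ ≤ 1) (e : E) : ψ e ≤ ‖e‖ :=
  (le_abs_self _).trans ((ψ.le_opNorm e).trans (mul_le_of_le_one_left (norm_nonneg e) hψ))

theorem pos_left_of_one_lt_add {E : Type*} [NormedAddCommGroup E] [NormedSpace ℝ E] {u v : E}
    (hu : ‖u‖ ≤ 1) (hv : ‖v‖ = 1) {a b : ℝ} (hz : ‖a • u + b • v‖ ≤ 1) (hab : 1 < a + b) :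
    0 < a := by
  by_contra! ha
  have hb : |b| ≤ 1 + |a| := calc
    |b| = ‖(a • u + b • v) - a • u‖ := by rw [add_sub_cancel_left, norm_smul, hv, mul_one,
      Real.norm_eq_abs]
    _ ≤ ‖a • u + b • v‖ + ‖a • u‖ := norm_sub_le _ _
    _ ≤ 1 + |a| := add_le_add hz (by
      rw [norm_smul, Real.norm_eq_abs]; exact mul_le_of_le_one_right (abs_nonneg a) hu)
  linarith [le_abs_self b, abs_of_nonpos ha]

/-- `e ⊥_B w` says that `e` keeps its norm in `E ⧸ ℝ ∙ w`; a norming functional there will do. -/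
theorem BJOrth.exists_dual {E : Type*} [NormedAddCommGroup E] [NormedSpace ℝ E] {e w : E}
    (h : BJOrth e w) : ∃ ψ : StrongDual ℝ E, ‖ψ‖ ≤ 1 ∧ ψ e = ‖e‖ ∧ ψ w = 0 := by
  set S := ℝ ∙ w
  have hq : ‖(Submodule.Quotient.mk e : E ⧸ S)‖ = ‖e‖ := by
    refine le_antisymm (Submodule.Quotient.norm_mk_le S e)
      (le_of_forall_pos_lt_add fun ε hε => ?_)
    obtain ⟨m, hm, hlt⟩ := Submodule.Quotient.norm_mk_lt (Submodule.Quotient.mk e : E ⧸ S) hε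
    obtain ⟨c, hc⟩ := Submodule.mem_span_singleton.1 ((Submodule.Quotient.eq S).1 hm)
    calc ‖e‖ ≤ ‖e + c • w‖ := h c
      _ = ‖m‖ := by rw [hc, add_sub_cancel]
      _ < _ := hlt
  obtain ⟨φ, hφ, hφe⟩ := exists_dual_vector'' ℝ (Submodule.Quotient.mk e : E ⧸ S)
  refine ⟨(φ.toLinearMap.comp S.mkQ).mkContinuous 1 fun m => ?_,
    LinearMap.mkContinuous_norm_le _ zero_le_one _, ?_, ?_⟩
  · calc ‖φ (S.mkQ m)‖ ≤ ‖φ‖ * ‖(Submodule.Quotient.mk m : E ⧸ S)‖ := φ.le_opNorm _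
      _ ≤ 1 * ‖m‖ := mul_le_mul hφ (Submodule.Quotient.norm_mk_le S m) (norm_nonneg _) zero_le_one
  · simpa [hq] using hφe
  · simp [(Submodule.Quotient.mk_eq_zero S).2 (Submodule.mem_span_singleton_self w)]

section NormAttainment

variable {X Y : Type*} [NormedAddCommGroup X] [NormedSpace ℝ X] [NormedAddCommGroup Y]
  [NormedSpace ℝ Y] {T : X →L[ℝ] Y}

def AttainsNormAt (T : X →L[ℝ] Y) (w : X) : Prop :=
  ‖T w‖ = ‖T‖ * ‖w‖

theorem attainsNormAt_smul_iff {c : ℝ} (hc : c ≠ 0) {w : X} :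
    AttainsNormAt T (c • w) ↔ AttainsNormAt T w := by
  simp only [AttainsNormAt, map_smul, norm_smul, mul_left_comm ‖T‖]
  exact mul_right_inj' (norm_ne_zero_iff.2 hc)

theorem AttainsNormAt.of_mem_normAttainSet {z : X} (hz : z ∈ normAttainSet T) :
    AttainsNormAt T z := by
  rw [AttainsNormAt, hz.1, hz.2, mul_one]

theorem inv_norm_smul_mem_normAttainSet_iff {w : X} (hw : w ≠ 0) :
    ‖w‖⁻¹ • w ∈ normAttainSet T ↔ AttainsNormAt T w := by
  have hunit : ‖‖w‖⁻¹ • w‖ = 1 := norm_smul_inv_norm hw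
  rw [← attainsNormAt_smul_iff (inv_ne_zero (norm_ne_zero_iff.2 hw)), AttainsNormAt, hunit,
    mul_one]
  exact ⟨And.right, And.intro hunit⟩

theorem neg_mem_normAttainSet {z : X} (hz : z ∈ normAttainSet T) : -z ∈ normAttainSet T :=
  ⟨by rw [norm_neg, hz.1], by rw [map_neg, norm_neg, hz.2]⟩

theorem attainsNormAt_of_le_dual {ψ : StrongDual ℝ Y} (hψ : ‖ψ‖ ≤ 1) {w : X}
    (h : ‖T‖ * ‖w‖ ≤ ψ (T w)) : AttainsNormAt T w :=
  le_antisymm (T.le_opNorm w) (h.trans (StrongDual.apply_le_norm hψ _))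

theorem exists_normAttainSet_gap {x y : X} (hxy : LinearIndependent ℝ ![x, y])
    (hx : AttainsNormAt T x) (hy : AttainsNormAt T y) (hadd : ¬AttainsNormAt T (x + y))
    {g : StrongDual ℝ X} (hgx : g x = 1) (hgy : g y = 1) :
    ∃ u v, u ∈ normAttainSet T ∧ v ∈ normAttainSet T ∧ LinearIndependent ℝ ![u, v] ∧
      0 < g u ∧ 0 < g v ∧ ∀ a b : ℝ, 0 < a → 0 < b → ¬AttainsNormAt T (a • u + b • v) := by
  set p : ℝ → X := fun t => AffineMap.lineMap x y t
  have hgp : ∀ t, g (p t) = 1 := fun t => by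
    simp [p, AffineMap.lineMap_apply_module, hgx, hgy]
  have hp : ∀ t, p t ≠ 0 := fun t h => by simpa [h] using hgp t
  have hE : IsClosed {t | AttainsNormAt T (p t)} := isClosed_eq (by fun_prop) (by fun_prop)
  have hmid : ¬AttainsNormAt T (p (1 / 2)) := by
    have hhalf : p (1 / 2) = (1 / 2 : ℝ) • (x + y) := by
      simp only [p, AffineMap.lineMap_apply_module]
      module
    rwa [hhalf, attainsNormAt_smul_iff (by norm_num)]
  obtain ⟨t₁, h₁, t₂, h₂, hlt, hgap⟩ := hE.exists_gap (a := 0) (b := 1) (by simpa [p])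
    (by simpa [p]) hmid (by norm_num) (by norm_num)
  have hr₁ : 0 < ‖p t₁‖⁻¹ := inv_pos.2 (norm_pos_iff.2 (hp t₁))
  have hr₂ : 0 < ‖p t₂‖⁻¹ := inv_pos.2 (norm_pos_iff.2 (hp t₂))
  refine ⟨_, _, (inv_norm_smul_mem_normAttainSet_iff (hp t₁)).2 h₁,
    (inv_norm_smul_mem_normAttainSet_iff (hp t₂)).2 h₂, ?_, by simp [hgp, hr₁],
    by simp [hgp, hr₂], fun a b ha hb h => ?_⟩
  · rw [LinearIndependent.pair_smul_smul_iff hr₁.ne'.isUnit hr₂.ne'.isUnit]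
    simp only [p, AffineMap.lineMap_apply_module, LinearIndependent.pair_add_smul_add_smul_iff]
    exact ⟨hxy, fun h => by nlinarith⟩
  · set a' := a * ‖p t₁‖⁻¹
    set b' := b * ‖p t₂‖⁻¹
    have ha' : 0 < a' := by positivity
    have hb' : 0 < b' := by positivity
    rw [smul_smul, smul_smul, AffineMap.smul_lineMap_add_smul_lineMap x y (by positivity),
      attainsNormAt_smul_iff (by positivity)] at h
    refine hgap _ ⟨?_, ?_⟩ h
    · rw [lt_div_iff₀ (by positivity)]; nlinarith
    · rw [div_lt_iff₀ (by positivity)]; nlinarith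

theorem apply_ne_zero_of_mem_normAttainSet {x y z : X}
    (hxy : LinearIndependent ℝ ![x, y]) (hX : Module.finrank ℝ X = 2)
    (hsub : ¬AttainsNormAt T (x - y)) {g : StrongDual ℝ X} (hgx : g x = 1) (hgy : g y = 1)
    (hz : z ∈ normAttainSet T) : g z ≠ 0 := by
  intro hgz
  obtain ⟨a, b, rfl⟩ := hxy.exists_smul_add_smul_eq hX z
  have hb : b = -a := by simpa [hgx, hgy, add_eq_zero_iff_eq_neg'] using hgz
  have ha : a ≠ 0 := by rintro rfl; simp [hb, normAttainSet] at hz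
  refine hsub ((attainsNormAt_smul_iff ha).1 ?_)
  simpa [hb, smul_sub, sub_eq_add_neg] using AttainsNormAt.of_mem_normAttainSet hz

theorem norm_le_norm_add_smul_smulRight_of_nonneg {u v : X} (hu : ‖u‖ ≤ 1)
    (hv : v ∈ normAttainSet T) {g : StrongDual ℝ X} (hgv : 0 ≤ g v) {lam : ℝ} (hlam : 0 ≤ lam) :
    ‖T‖ ≤ ‖T + lam • g.smulRight (T v - T u)‖ := by
  obtain ⟨ψ, hψ, hψv⟩ := exists_dual_vector'' ℝ (T v)
  replace hψv : ψ (T v) = ‖T‖ := hψv.trans hv.2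
  have hψu : ψ (T u) ≤ ‖T‖ := (StrongDual.apply_le_norm hψ _).trans (T.unit_le_opNorm u hu)
  calc ‖T‖ ≤ ‖T‖ + lam * g v * (‖T‖ - ψ (T u)) :=
        le_add_of_nonneg_right (mul_nonneg (mul_nonneg hlam hgv) (sub_nonneg.2 hψu))
    _ = ψ ((T + lam • g.smulRight (T v - T u)) v) := by
        simp only [add_apply, smul_apply, ContinuousLinearMap.smulRight_apply, map_add, map_smul,
          map_sub, smul_eq_mul]
        rw [hψv]
        ring
    _ ≤ ‖T + lam • g.smulRight (T v - T u)‖ :=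
        (StrongDual.apply_le_norm hψ _).trans ((T + _).unit_le_opNorm v hv.1.le)

theorem norm_le_norm_add_smul_smulRight {u v : X} (hu : u ∈ normAttainSet T)
    (hv : v ∈ normAttainSet T) {g : StrongDual ℝ X} (hgu : 0 ≤ g u) (hgv : 0 ≤ g v) (lam : ℝ) :
    ‖T‖ ≤ ‖T + lam • g.smulRight (T v - T u)‖ := by
  rcases le_total 0 lam with hlam | hlam
  · exact norm_le_norm_add_smul_smulRight_of_nonneg hu.1.le hv hgv hlam
  · have hswap : lam • g.smulRight (T v - T u) = (-lam) • g.smulRight (T u - T v) := by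
      ext z
      simp only [smul_apply, ContinuousLinearMap.smulRight_apply]
      module
    rw [hswap]
    exact norm_le_norm_add_smul_smulRight_of_nonneg hv.1.le hu hgu (neg_nonneg.2 hlam)

theorem norming_functional_apply_ne_of_nonneg {u v z : X} (hu : u ∈ normAttainSet T)
    (hv : v ∈ normAttainSet T)
    (hcone : ∀ a b : ℝ, 0 < a → 0 < b → ¬AttainsNormAt T (a • u + b • v))
    (hz : z ∈ normAttainSet T) {a b : ℝ} (hzab : a • u + b • v = z) {ψ : StrongDual ℝ Y}
    (hψ : ‖ψ‖ ≤ 1) (hψz : ψ (T z) = ‖T‖) (hψu : 0 ≤ ψ (T u)) : ψ (T u) ≠ ψ (T v) := by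
  intro huv
  have hval : (a + b) * ψ (T u) = ‖T‖ := by
    rw [← hψz, ← hzab, map_add, map_smul, map_smul, map_add, map_smul, map_smul, ← huv]
    simp only [smul_eq_mul]
    ring
  rcases ((StrongDual.apply_le_norm hψ _).trans_eq hu.2).eq_or_lt with hflat | hlt
  · refine hcone 1 1 one_pos one_pos (attainsNormAt_of_le_dual hψ ?_)
    calc ‖T‖ * ‖(1 : ℝ) • u + (1 : ℝ) • v‖ ≤ ‖T‖ * 2 := by
          refine mul_le_mul_of_nonneg_left ?_ (norm_nonneg T)
          simpa [hu.1, hv.1, one_add_one_eq_two] using norm_add_le u v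
      _ = ψ (T ((1 : ℝ) • u + (1 : ℝ) • v)) := by
          rw [one_smul, one_smul, map_add, map_add, ← huv, hflat]
          ring
  · have hab : 1 < a + b := by nlinarith
    have hz' : ‖a • u + b • v‖ ≤ 1 := (congrArg norm hzab).trans hz.1 |>.le
    have ha := pos_left_of_one_lt_add hu.1.le hv.1 hz' hab
    have hb := pos_left_of_one_lt_add hv.1.le hu.1 (by rwa [add_comm]) (by rwa [add_comm])
    refine hcone a b ha hb (attainsNormAt_of_le_dual hψ ?_)
    rw [hzab, hz.1, mul_one, hψz]

theorem norming_functional_apply_ne {u v z : X} (hu : u ∈ normAttainSet T)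
    (hv : v ∈ normAttainSet T)
    (hcone : ∀ a b : ℝ, 0 < a → 0 < b → ¬AttainsNormAt T (a • u + b • v))
    (hz : z ∈ normAttainSet T) {a b : ℝ} (hzab : a • u + b • v = z) {ψ : StrongDual ℝ Y}
    (hψ : ‖ψ‖ ≤ 1) (hψz : ψ (T z) = ‖T‖) : ψ (T u) ≠ ψ (T v) := by
  rcases le_total 0 (ψ (T u)) with hψu | hψu
  · exact norming_functional_apply_ne_of_nonneg hu hv hcone hz hzab hψ hψz hψu
  · simpa using norming_functional_apply_ne_of_nonneg hu hv hcone (neg_mem_normAttainSet hz)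
      (a := -a) (b := -b) (by rw [← hzab]; module) (ψ := -ψ) (by rwa [norm_neg])
      (by simpa using hψz) (by simpa using hψu)

theorem not_bjOrth_smulRight {u v z : X} (hX : Module.finrank ℝ X = 2)
    (hu : u ∈ normAttainSet T) (hv : v ∈ normAttainSet T) (huv : LinearIndependent ℝ ![u, v])
    (hcone : ∀ a b : ℝ, 0 < a → 0 < b → ¬AttainsNormAt T (a • u + b • v))
    {g : StrongDual ℝ X} (hgz : g z ≠ 0) (hz : z ∈ normAttainSet T) :
    ¬BJOrth (T z) (g.smulRight (T v - T u) z) := by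
  intro h
  obtain ⟨ψ, hψ, hψz, hψA⟩ := h.exists_dual
  obtain ⟨a, b, hzab⟩ := huv.exists_smul_add_smul_eq hX z
  refine norming_functional_apply_ne hu hv hcone hz hzab hψ (hψz.trans hz.2) ?_
  rw [ContinuousLinearMap.smulRight_apply, map_smul, map_sub, smul_eq_mul] at hψA
  exact (sub_eq_zero.1 ((mul_eq_zero.1 hψA).resolve_left hgz)).symm

end NormAttainment

theorem stmt1_general {X Y : Type*} [NormedAddCommGroup X] [NormedSpace ℝ X]
    [NormedAddCommGroup Y] [NormedSpace ℝ Y]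
    (hX : Module.finrank ℝ X = 2)
    (T : X →L[ℝ] Y) (x y : X)
    (hx : x ∈ normAttainSet T) (hy : y ∈ normAttainSet T)
    (hxy : x ≠ y) (hxy' : x ≠ -y)
    (hplus : ‖x + y‖⁻¹ • (x + y) ∉ normAttainSet T)
    (hminus : ‖x - y‖⁻¹ • (x - y) ∉ normAttainSet T) :
    ∃ A : X →L[ℝ] Y, (∀ lam : ℝ, ‖T‖ ≤ ‖T + lam • A‖) ∧
      ∀ z ∈ normAttainSet T, ¬ BJOrth (T z) (A z) := by
  have hind := linearIndependent_pair_of_norm_eq_one hx.1 hy.1 hxy hxy'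
  have hadd : ¬AttainsNormAt T (x + y) :=
    mt (inv_norm_smul_mem_normAttainSet_iff fun h => hxy' (eq_neg_of_add_eq_zero_left h)).2 hplus
  have hsub : ¬AttainsNormAt T (x - y) :=
    mt (inv_norm_smul_mem_normAttainSet_iff (sub_ne_zero.2 hxy)).2 hminus
  obtain ⟨g, hgx, hgy⟩ := hind.exists_dual_eq_one hX
  obtain ⟨u, v, hu, hv, huv, hgu, hgv, hcone⟩ := exists_normAttainSet_gap hind
    (.of_mem_normAttainSet hx) (.of_mem_normAttainSet hy) hadd hgx hgy
  exact ⟨g.smulRight (T v - T u), norm_le_norm_add_smul_smulRight hu hv hgu.le hgv.le,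
    fun z hz => not_bjOrth_smulRight hX hu hv huv hcone
      (apply_ne_zero_of_mem_normAttainSet hind hX hsub hgx hgy hz) hz⟩

/-- If `X` is a two-dimensional real Banach space, `Y` a real Banach space of
dimension at least two, and `T : X → Y` is a bounded linear operator for which there are
`x, y ∈ M_T` with `x ≠ ±y` and `(x+y)/‖x+y‖, (x−y)/‖x−y‖ ∉ M_T`, then `T` does not satisfy
the Bhatia–Šemrl property. -/
theorem stmt1 {X Y : Type*} [NormedAddCommGroup X] [NormedSpace ℝ X] [CompleteSpace X]
    [NormedAddCommGroup Y] [NormedSpace ℝ Y] [CompleteSpace Y]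
    (hX : Module.finrank ℝ X = 2) (hY : 2 ≤ Module.rank ℝ Y)
    (T : X →L[ℝ] Y) (x y : X)
    (hx : x ∈ normAttainSet T) (hy : y ∈ normAttainSet T)
    (hxy : x ≠ y) (hxy' : x ≠ -y)
    (hplus : ‖x + y‖⁻¹ • (x + y) ∉ normAttainSet T)
    (hminus : ‖x - y‖⁻¹ • (x - y) ∉ normAttainSet T) :
    ∃ A : X →L[ℝ] Y, (∀ lam : ℝ, ‖T‖ ≤ ‖T + lam • A‖) ∧
      ∀ z ∈ normAttainSet T, ¬ BJOrth (T z) (A z) :=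
  stmt1_general hX T x y hx hy hxy hxy' hplus hminus
end

section
/- Let X be an n-dimensional real Banach space with n ≥ 3, let Y be a real Banach space, and let T : X → Y be a bounded linear operator whose norm attainment set M_T has at least 4 elements. Suppose: (a) there exists a basis {x_1, x_2, …, x_n} of X with x_1, x_2 ∈ M_T; and (b) there exist real scalars α_3, …, α_n and β_3, …, β_n such that for every w ∈ M_T, writing w = c_1 x_1 + c_2 x_2 + ⋯ + c_n x_n in this basis, one has c_1 + c_2 + α_3 c_3 + ⋯ + α_n c_n ≠ 0 and c_1 − c_2 + β_3 c_3 + ⋯ + β_n c_n ≠ 0. Then at least one of the following holds: (i) ⋃_{x ∈ M_T} (Tx)^⊥ = Y; or (ii) T does not satisfy the Bhatia–Šemrl property, i.e., there exists a bounded linear operator A : X → Y with T ⊥_B A such that Tx is not Birkhoff–James orthogonal to Ax for any x ∈ M_T. -/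
/-- One-sided Birkhoff–James orthogonality, `y ∈ x⁺`. -/
def BJOrthPlus {E : Type*} [NormedAddCommGroup E] [NormedSpace ℝ E] (x y : E) : Prop :=
  ∀ lam : ℝ, 0 ≤ lam → ‖x‖ ≤ ‖x + lam • y‖

/-- `A` witnesses the failure of the Bhatia–Šemrl property for `T`. -/
def IsBSCounterexample {X Y : Type*} [NormedAddCommGroup X] [NormedSpace ℝ X]
    [NormedAddCommGroup Y] [NormedSpace ℝ Y] (T A : X →L[ℝ] Y) : Prop :=
  (∀ lam : ℝ, ‖T‖ ≤ ‖T + lam • A‖) ∧ ∀ x ∈ normAttainSet T, ¬ BJOrth (T x) (A x)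

section OneSided

variable {E : Type*} [NormedAddCommGroup E] [NormedSpace ℝ E]

theorem convexOn_norm_add_smul (u v : E) : ConvexOn ℝ Set.univ fun l : ℝ => ‖u + l • v‖ := by
  simpa [Function.comp_def, AffineMap.lineMap_apply, add_comm] using
    (convexOn_norm convex_univ).comp_affineMap (AffineMap.lineMap u (u + v) : ℝ →ᵃ[ℝ] E)

theorem bjOrthPlus_or_bjOrthPlus_neg (u v : E) : BJOrthPlus u v ∨ BJOrthPlus u (-v) := by
  by_contra! h
  simp only [BJOrthPlus, not_forall, not_le] at h
  obtain ⟨⟨l₁, hl₁, h₁⟩, ⟨l₂, hl₂, h₂⟩⟩ := h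
  have hl₂_pos : 0 < l₂ := hl₂.lt_of_ne (by rintro rfl; simp at h₂)
  -- `l ↦ ‖u + l • v‖` is convex and drops below its value at `0` on both sides of `0`.
  have := (convexOn_norm_add_smul u v).le_right_of_left_le'' (Set.mem_univ (-l₂))
    (Set.mem_univ l₁) (neg_neg_of_pos hl₂_pos) hl₁ (by simpa using h₂.le)
  simp only [zero_smul, add_zero] at this
  linarith

theorem BJOrth.of_smul_right {u y : E} {c : ℝ} (h : BJOrth u (c • y)) (hc : c ≠ 0) :
    BJOrth u y := fun lam => by
  simpa [smul_smul, div_mul_cancel₀ _ hc] using h (lam / c)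

end OneSided

section Operators

variable {X Y : Type*} [NormedAddCommGroup X] [NormedSpace ℝ X]
  [NormedAddCommGroup Y] [NormedSpace ℝ Y]

theorem opNorm_le_opNorm_add_smul_of_bjOrthPlus {T A : X →L[ℝ] Y} {x z : X}
    (hx : x ∈ normAttainSet T) (hz : z ∈ normAttainSet T)
    (hxA : BJOrthPlus (T x) (A x)) (hzA : BJOrthPlus (T z) (-A z)) (lam : ℝ) :
    ‖T‖ ≤ ‖T + lam • A‖ := by
  rcases le_or_gt 0 lam with hlam | hlam
  · calc ‖T‖ = ‖T x‖ := hx.2.symm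
      _ ≤ ‖T x + lam • A x‖ := hxA lam hlam
      _ ≤ ‖T + lam • A‖ := (T + lam • A).unit_le_opNorm x hx.1.le
  · calc ‖T‖ = ‖T z‖ := hz.2.symm
      _ ≤ ‖T z + (-lam) • -A z‖ := hzA (-lam) (by linarith)
      _ = ‖(T + lam • A) z‖ := by simp
      _ ≤ ‖T + lam • A‖ := (T + lam • A).unit_le_opNorm z hz.1.le

theorem isBSCounterexample_smulRight {T : X →L[ℝ] Y} {x z : X}
    (hx : x ∈ normAttainSet T) (hz : z ∈ normAttainSet T) {y : Y}
    (hy : ∀ w ∈ normAttainSet T, ¬ BJOrth (T w) y)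
    {f : StrongDual ℝ X} (hf : ∀ w ∈ normAttainSet T, f w ≠ 0)
    (hfx : BJOrthPlus (T x) (f x • y)) (hfz : BJOrthPlus (T z) (-(f z • y))) :
    IsBSCounterexample T (f.smulRight y) :=
  ⟨opNorm_le_opNorm_add_smul_of_bjOrthPlus hx hz hfx hfz,
    fun w hw hwA => hy w hw (BJOrth.of_smul_right hwA (hf w hw))⟩

theorem exists_isBSCounterexample {T : X →L[ℝ] Y} {x z : X}
    (hx : x ∈ normAttainSet T) (hz : z ∈ normAttainSet T) {y : Y}
    (hy : ∀ w ∈ normAttainSet T, ¬ BJOrth (T w) y) {f g : StrongDual ℝ X}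
    (hf : ∀ w ∈ normAttainSet T, f w ≠ 0) (hg : ∀ w ∈ normAttainSet T, g w ≠ 0)
    (hfx : f x = 1) (hfz : f z = 1) (hgx : g x = 1) (hgz : g z = -1) :
    ∃ A, IsBSCounterexample T A := by
  rcases bjOrthPlus_or_bjOrthPlus_neg (T x) y with hxy | hxy <;>
    rcases bjOrthPlus_or_bjOrthPlus_neg (T z) y with hzy | hzy
  · exact ⟨_, isBSCounterexample_smulRight hx hz hy hg (by simpa [hgx]) (by simpa [hgz])⟩
  · exact ⟨_, isBSCounterexample_smulRight hx hz hy hf (by simpa [hfx]) (by simpa [hfz])⟩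
  · exact ⟨_, isBSCounterexample_smulRight hz hx hy hf (by simpa [hfz]) (by simpa [hfx])⟩
  · exact ⟨_, isBSCounterexample_smulRight hz hx hy hg (by simpa [hgz]) (by simpa [hgx])⟩

end Operators

theorem stmt2 {X Y : Type*} [NormedAddCommGroup X] [NormedSpace ℝ X]
    [NormedAddCommGroup Y] [NormedSpace ℝ Y]
    (n : ℕ) (hn : 3 ≤ n)
    (T : X →L[ℝ] Y)
    (b : Module.Basis (Fin n) ℝ X)
    (hb0 : b ⟨0, by omega⟩ ∈ normAttainSet T)
    (hb1 : b ⟨1, by omega⟩ ∈ normAttainSet T)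
    (α β : Fin n → ℝ)
    (hαβ : ∀ w ∈ normAttainSet T,
      (b.repr w ⟨0, by omega⟩ + b.repr w ⟨1, by omega⟩ +
        ∑ i ∈ Finset.univ.filter (fun i : Fin n => 2 ≤ (i : ℕ)), α i * b.repr w i) ≠ 0 ∧
      (b.repr w ⟨0, by omega⟩ - b.repr w ⟨1, by omega⟩ +
        ∑ i ∈ Finset.univ.filter (fun i : Fin n => 2 ≤ (i : ℕ)), β i * b.repr w i) ≠ 0) :
    (⋃ x ∈ normAttainSet T, {y : Y | BJOrth (T x) y}) = Set.univ ∨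
    (∃ A : X →L[ℝ] Y, (∀ lam : ℝ, ‖T‖ ≤ ‖T + lam • A‖) ∧
      ∀ x ∈ normAttainSet T, ¬ BJOrth (T x) (A x)) := by
  have : FiniteDimensional ℝ X := Module.Finite.of_basis b
  by_cases hU : (⋃ x ∈ normAttainSet T, {y : Y | BJOrth (T x) y}) = Set.univ
  · exact Or.inl hU
  obtain ⟨y, hy⟩ : ∃ y : Y, ∀ x ∈ normAttainSet T, ¬ BJOrth (T x) y := by
    simpa [Set.eq_univ_iff_forall] using hU
  let φ (s : ℝ) (γ : Fin n → ℝ) : StrongDual ℝ X := LinearMap.toContinuousLinearMap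
    (b.coord ⟨0, by omega⟩ + s • b.coord ⟨1, by omega⟩ +
      ∑ i ∈ Finset.univ.filter (fun i : Fin n => 2 ≤ (i : ℕ)), γ i • b.coord i)
  have hφ0 (s γ) : φ s γ (b ⟨0, by omega⟩) = 1 := by
    simp [φ, Module.Basis.repr_self, Finsupp.single_apply]
  have hφ1 (s γ) : φ s γ (b ⟨1, by omega⟩) = s := by
    simp [φ, Module.Basis.repr_self, Finsupp.single_apply]
  refine Or.inr (exists_isBSCounterexample (f := φ 1 α) (g := φ (-1) β) hb0 hb1 hy
    (fun w hw => ?_) (fun w hw => ?_) (hφ0 1 α) (hφ1 1 α) (hφ0 (-1) β) (hφ1 (-1) β))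
  · simpa [φ] using (hαβ w hw).1
  · simpa [φ, ← sub_eq_add_neg] using (hαβ w hw).2
end

section
/- Let X be a finite-dimensional real Banach space and let Y be a smooth real Banach space of dimension at least two, i.e., for every nonzero y ∈ Y there is a unique bounded linear functional f on Y with ‖f‖ = 1 and f(y) = ‖y‖. Let T : X → Y be a bounded linear operator such that M_T is a countable set with more than two points. Then T does not satisfy the Bhatia–Šemrl property; that is, there exists a bounded linear operator A : X → Y with T ⊥_B A such that Tx is not Birkhoff–James orthogonal to Ax for any x ∈ M_T. -/
/-!
Take two linearly independent points `x₁, x₂` of `M_T` (three distinct unit vectors cannot lie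
on one line) and, for `x ∈ M_T`, let `f_x` be the unique supporting functional at `T x`; here
`T x ≠ 0`, since for `T = 0` the set `M_T` would be the whole unit sphere, which is connected,
hence uncountable. Baire's theorem, in `Y` and in `X*`, gives `y₀` with `f_x y₀ ≠ 0` and `g`
with `g x ≠ 0` for all `x ∈ M_T`, where `g` can be taken in the open set on which
`g x₁ * f_{x₁} y₀ > 0 > g x₂ * f_{x₂} y₀`. For `A = g ⊗ y₀` these opposite signs give
`T ⊥_B A`. On the other hand `T x ⊥_B A x` would yield, by Hahn–Banach in `Y ⧸ ℝ ∙ A x`, a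
supporting functional at `T x` vanishing at `A x`; by smoothness it is `f_x`, but
`f_x (A x) = g x * f_x y₀ ≠ 0`.
-/

open Metric Cardinal

section NormedSpace

variable {E : Type*} [NormedAddCommGroup E] [NormedSpace ℝ E]

def IsSupportingFunctional (f : E →L[ℝ] ℝ) (x : E) : Prop :=
  ‖f‖ = 1 ∧ f x = ‖x‖

theorem IsSupportingFunctional.of_norm_le_one {f : E →L[ℝ] ℝ} {x : E} (hx : x ≠ 0)
    (hf : ‖f‖ ≤ 1) (hfx : f x = ‖x‖) : IsSupportingFunctional f x := by
  refine ⟨hf.antisymm ?_, hfx⟩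
  have := f.le_opNorm x
  rw [hfx, Real.norm_of_nonneg (norm_nonneg x)] at this
  exact one_le_of_le_mul_right₀ (norm_pos_iff.mpr hx) this

theorem BJOrth.norm_mk_eq {x y : E} (h : BJOrth x y) :
    ‖Submodule.Quotient.mk (p := ℝ ∙ y) x‖ = ‖x‖ := by
  refine (Submodule.Quotient.norm_mk_le _ x).antisymm ?_
  rw [show ‖Submodule.Quotient.mk (p := ℝ ∙ y) x‖ = infDist x (ℝ ∙ y : Set E) from
    QuotientAddGroup.norm_mk (S := (ℝ ∙ y).toAddSubgroup) x]
  refine (le_infDist ⟨0, zero_mem _⟩).mpr fun z hz => ?_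
  obtain ⟨t, rfl⟩ := Submodule.mem_span_singleton.mp hz
  simpa [dist_eq_norm, sub_eq_add_neg, ← neg_smul] using h (-t)

theorem BJOrth.exists_isSupportingFunctional {x y : E} (hx : x ≠ 0) (h : BJOrth x y) :
    ∃ f : E →L[ℝ] ℝ, IsSupportingFunctional f x ∧ f y = 0 := by
  obtain ⟨g, hg, hgx⟩ := exists_dual_vector'' ℝ (Submodule.Quotient.mk (p := ℝ ∙ y) x)
  refine ⟨g.comp (ℝ ∙ y).mkQL, IsSupportingFunctional.of_norm_le_one hx ?_ ?_, ?_⟩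
  · refine (g.opNorm_comp_le _).trans (mul_le_one₀ hg (norm_nonneg _) ?_)
    exact ContinuousLinearMap.opNorm_le_bound _ zero_le_one fun z => by
      simpa using Submodule.Quotient.norm_mk_le _ z
  · simpa [h.norm_mk_eq] using hgx
  · simp [(Submodule.Quotient.mk_eq_zero _).mpr (Submodule.mem_span_singleton_self y)]

theorem LinearIndependent.exists_strongDual_apply_eq {ι : Type*} [Fintype ι] {v : ι → E}
    (hv : LinearIndependent ℝ v) (c : ι → ℝ) : ∃ g : E →L[ℝ] ℝ, ∀ i, g (v i) = c i := by
  classical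
  obtain ⟨g, hg⟩ := SeparatingDual.dualMap_surjective_iff.mpr
    (linearIndependent_iff_injective_fintypeLinearCombination.mp hv)
    (Fintype.linearCombination ℝ c)
  refine ⟨g, fun i => ?_⟩
  simpa using LinearMap.congr_fun hg (Pi.single i 1)

theorem dense_setOf_forall_apply_ne_zero [BaireSpace E] {ι : Type*} {s : Set ι}
    (hs : s.Countable) (φ : ι → E →L[ℝ] ℝ) (hφ : ∀ i ∈ s, φ i ≠ 0) :
    Dense {w | ∀ i ∈ s, φ i w ≠ 0} := by
  simp only [Set.ofPred_forall]
  refine dense_biInter_of_isOpen (fun i _ => isOpen_ne_fun (φ i).continuous continuous_const) hs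
    fun i hi => ?_
  change Dense (LinearMap.ker (φ i : E →ₗ[ℝ] ℝ) : Set E)ᶜ
  rw [← interior_eq_empty_iff_dense_compl, ← Set.not_nonempty_iff_eq_empty]
  intro hint
  have := LinearMap.ker_eq_top.mp (Submodule.eq_top_of_nonempty_interior' _ hint)
  exact hφ i hi (ContinuousLinearMap.coe_injective this)

theorem exists_strongDual_mem_forall_apply_ne_zero {s : Set E} (hs : s.Countable) (h0 : 0 ∉ s)
    {U : Set (E →L[ℝ] ℝ)} (hU : IsOpen U) (hU' : U.Nonempty) :
    ∃ g ∈ U, ∀ x ∈ s, g x ≠ 0 := by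
  refine (dense_setOf_forall_apply_ne_zero hs (ContinuousLinearMap.apply ℝ ℝ) fun x hx => ?_)
    |>.inter_open_nonempty U hU hU'
  obtain ⟨g, hg⟩ := SeparatingDual.exists_ne_zero (R := ℝ) (ne_of_mem_of_not_mem hx h0)
  exact fun h => hg (by simpa using congr($h g))

theorem LinearIndependent.exists_strongDual_pos_neg_forall_ne_zero {s : Set E} (hs : s.Countable)
    (h0 : 0 ∉ s) {x₁ x₂ : E} (hli : LinearIndependent ℝ ![x₁, x₂]) {a b : ℝ} (ha : a ≠ 0)
    (hb : b ≠ 0) : ∃ g : E →L[ℝ] ℝ, (0 < g x₁ * a ∧ g x₂ * b < 0) ∧ ∀ x ∈ s, g x ≠ 0 := by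
  refine exists_strongDual_mem_forall_apply_ne_zero hs h0
    (U := {g | 0 < g x₁ * a ∧ g x₂ * b < 0}) ?_ ?_
  · have hcont (x : E) : Continuous fun g : E →L[ℝ] ℝ => g x :=
      (ContinuousLinearMap.apply ℝ ℝ x).continuous
    exact (isOpen_lt continuous_const ((hcont x₁).mul continuous_const)).inter
      (isOpen_lt ((hcont x₂).mul continuous_const) continuous_const)
  · obtain ⟨g, hg⟩ := hli.exists_strongDual_apply_eq ![a, -b]
    refine ⟨g, ?_, ?_⟩
    · rw [show g x₁ = a from hg 0]
      exact mul_self_pos.mpr ha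
    · rw [show g x₂ = -b from hg 1, neg_mul, neg_lt_zero]
      exact mul_self_pos.mpr hb

theorem eq_or_eq_neg_of_not_linearIndependent {u v : E} (hu : u ≠ 0) (huv : ‖u‖ = ‖v‖)
    (h : ¬LinearIndependent ℝ ![u, v]) : v = u ∨ v = -u := by
  rw [LinearIndependent.pair_iff' hu] at h
  push Not at h
  obtain ⟨a, rfl⟩ := h
  rw [norm_smul, Real.norm_eq_abs, eq_comm, mul_eq_right₀ (norm_ne_zero_iff.mpr hu)] at huv
  rcases abs_eq_abs.mp (huv.trans abs_one.symm) with rfl | rfl <;> simp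

theorem exists_linearIndependent_pair_of_two_lt_mk {s : Set E} (hs : s ⊆ sphere 0 1)
    (h : 2 < #s) : ∃ x₁ ∈ s, ∃ x₂ ∈ s, LinearIndependent ℝ ![x₁, x₂] := by
  by_contra! hdep
  obtain ⟨u, hu⟩ : s.Nonempty :=
    Set.nonempty_coe_sort.mp (Cardinal.mk_ne_zero_iff.mp (zero_lt_two.trans h).ne')
  have hsub : s ⊆ {u, -u} := fun v hv =>
    eq_or_eq_neg_of_not_linearIndependent (ne_zero_of_mem_unit_sphere ⟨u, hs hu⟩) (by
      rw [mem_sphere_zero_iff_norm.mp (hs hu), mem_sphere_zero_iff_norm.mp (hs hv)])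
      (hdep u hu v hv)
  have hle : #s ≤ 2 := calc
    #s ≤ #({-u} : Set E) + 1 := (mk_le_mk_of_subset hsub).trans mk_insert_le
    _ = 2 := by rw [mk_singleton, one_add_one_eq_two]
  exact hle.not_gt h

theorem not_countable_sphere (h : 1 < Module.rank ℝ E) {r : ℝ} (hr : 0 < r) :
    ¬(sphere (0 : E) r).Countable := by
  intro hs
  have : Nontrivial E := rank_pos_iff_nontrivial.mp (zero_lt_one.trans h)
  obtain ⟨x, hx⟩ := (NormedSpace.sphere_nonempty (x := (0 : E))).mpr hr.le
  have hx' : -x ∈ sphere (0 : E) r := by simpa using hx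
  have := hs.isTotallyDisconnected _ subset_rfl (isConnected_sphere h 0 hr.le).isPreconnected hx hx'
  exact ne_of_mem_sphere hx hr.ne' (by simpa [eq_neg_iff_add_eq_zero, ← two_smul ℝ x] using this)

end NormedSpace

section Operators

variable {X Y : Type*} [NormedAddCommGroup X] [NormedSpace ℝ X]
  [NormedAddCommGroup Y] [NormedSpace ℝ Y]

theorem normAttainSet_subset_sphere (T : X →L[ℝ] Y) : normAttainSet T ⊆ sphere 0 1 :=
  fun _ hx => mem_sphere_zero_iff_norm.mpr hx.1

theorem normAttainSet_zero : normAttainSet (0 : X →L[ℝ] Y) = sphere 0 1 := by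
  ext x
  simp [normAttainSet]

theorem ne_zero_of_countable_normAttainSet {T : X →L[ℝ] Y} (h : 1 < Module.rank ℝ X)
    (hT : (normAttainSet T).Countable) : T ≠ 0 := by
  rintro rfl
  rw [normAttainSet_zero] at hT
  exact not_countable_sphere h one_pos hT

theorem apply_ne_zero_of_mem_normAttainSet_s4 {T : X →L[ℝ] Y} (hT : T ≠ 0) {x : X}
    (hx : x ∈ normAttainSet T) : T x ≠ 0 := by
  rw [← norm_ne_zero_iff, hx.2, norm_ne_zero_iff]
  exact hT

theorem norm_le_norm_add_smul_of_nonneg {T A : X →L[ℝ] Y} {x : X} (hx : x ∈ normAttainSet T)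
    {f : Y →L[ℝ] ℝ} (hf : IsSupportingFunctional f (T x)) {lam : ℝ}
    (hlam : 0 ≤ lam * f (A x)) : ‖T‖ ≤ ‖T + lam • A‖ := calc
  ‖T‖ = f (T x) := by rw [hf.2, hx.2]
  _ ≤ f ((T + lam • A) x) := by simpa using hlam
  _ ≤ ‖(T + lam • A) x‖ := (le_abs_self _).trans <| (f.le_opNorm _).trans (by rw [hf.1, one_mul])
  _ ≤ ‖T + lam • A‖ := (T + lam • A).unit_le_opNorm x hx.1.le

theorem bjOrth_of_supportingFunctional_signs {T A : X →L[ℝ] Y} {x₁ x₂ : X}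
    (hx₁ : x₁ ∈ normAttainSet T) (hx₂ : x₂ ∈ normAttainSet T) {f₁ f₂ : Y →L[ℝ] ℝ}
    (hf₁ : IsSupportingFunctional f₁ (T x₁)) (hf₂ : IsSupportingFunctional f₂ (T x₂))
    (h₁ : 0 ≤ f₁ (A x₁)) (h₂ : f₂ (A x₂) ≤ 0) : BJOrth T A := fun lam => by
  rcases le_total 0 lam with hlam | hlam
  · exact norm_le_norm_add_smul_of_nonneg hx₁ hf₁ (mul_nonneg hlam h₁)
  · exact norm_le_norm_add_smul_of_nonneg hx₂ hf₂ (mul_nonneg_of_nonpos_of_nonpos hlam h₂)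

end Operators

theorem stmt4_general {X Y : Type*} [NormedAddCommGroup X] [NormedSpace ℝ X]
    [NormedAddCommGroup Y] [NormedSpace ℝ Y] [CompleteSpace Y]
    (hsmooth : ∀ y : Y, y ≠ 0 → ∃! f : Y →L[ℝ] ℝ, ‖f‖ = 1 ∧ f y = ‖y‖)
    (T : X →L[ℝ] Y)
    (hcount : (normAttainSet T).Countable)
    (hcard : 2 < Cardinal.mk ↥(normAttainSet T)) :
    ∃ A : X →L[ℝ] Y, (∀ lam : ℝ, ‖T‖ ≤ ‖T + lam • A‖) ∧
      ∀ x ∈ normAttainSet T, ¬ BJOrth (T x) (A x) := by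
  obtain ⟨x₁, hx₁, x₂, hx₂, hli⟩ :=
    exists_linearIndependent_pair_of_two_lt_mk (normAttainSet_subset_sphere T) hcard
  have hrank : 1 < Module.rank ℝ X := by
    have h2 : ((2 : ℕ) : Cardinal) ≤ Module.rank ℝ X := Module.le_rank_iff.mpr ⟨_, hli⟩
    exact Cardinal.one_lt_two.trans_le (by simpa using h2)
  have hTx : ∀ x ∈ normAttainSet T, T x ≠ 0 := fun x =>
    apply_ne_zero_of_mem_normAttainSet_s4 (ne_zero_of_countable_normAttainSet hrank hcount)
  choose! F hF using fun x (hx : x ∈ normAttainSet T) => (hsmooth (T x) (hTx x hx)).exists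
  obtain ⟨y₀, hy₀⟩ := (dense_setOf_forall_apply_ne_zero hcount F fun x hx h0 => by
    simpa [h0] using (hF x hx).1).nonempty
  obtain ⟨g, ⟨hg₁, hg₂⟩, hg⟩ := hli.exists_strongDual_pos_neg_forall_ne_zero hcount
    (fun h0 => by simpa using (normAttainSet_subset_sphere T h0)) (hy₀ x₁ hx₁) (hy₀ x₂ hx₂)
  refine ⟨g.smulRight y₀, bjOrth_of_supportingFunctional_signs hx₁ hx₂ (hF x₁ hx₁) (hF x₂ hx₂)
    (by simpa using hg₁.le) (by simpa using hg₂.le), fun x hx hBJ => ?_⟩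
  obtain ⟨G, hG, hGA⟩ := hBJ.exists_isSupportingFunctional (hTx x hx)
  rw [(hsmooth (T x) (hTx x hx)).unique hG (hF x hx)] at hGA
  simp only [ContinuousLinearMap.smulRight_apply, map_smul, smul_eq_mul] at hGA
  exact mul_ne_zero (hg x hx) (hy₀ x hx) hGA

/-- If `X` is a finite-dimensional real Banach space, `Y` is a smooth real
Banach space of dimension at least two, and `M_T` is countable with more than two points,
then `T` does not satisfy the Bhatia–Šemrl property. -/
theorem stmt4 {X Y : Type*} [NormedAddCommGroup X] [NormedSpace ℝ X] [CompleteSpace X]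
    [FiniteDimensional ℝ X]
    [NormedAddCommGroup Y] [NormedSpace ℝ Y] [CompleteSpace Y]
    (hY : 2 ≤ Module.rank ℝ Y)
    (hsmooth : ∀ y : Y, y ≠ 0 → ∃! f : Y →L[ℝ] ℝ, ‖f‖ = 1 ∧ f y = ‖y‖)
    (T : X →L[ℝ] Y)
    (hcount : (normAttainSet T).Countable)
    (hcard : 2 < Cardinal.mk ↥(normAttainSet T)) :
    ∃ A : X →L[ℝ] Y, (∀ lam : ℝ, ‖T‖ ≤ ‖T + lam • A‖) ∧
      ∀ x ∈ normAttainSet T, ¬ BJOrth (T x) (A x) :=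
  stmt4_general hsmooth T hcount hcard
end

section
/- Let X be a two-dimensional real polyhedral Banach space, i.e., a two-dimensional real normed space whose closed unit ball has only finitely many extreme points. Let x be an extreme point of the closed unit ball of X, and suppose v_1, v_2 are unit vectors such that the normal cone K = {α v_1 + β v_2 : α, β ≥ 0} satisfies x^⊥ = K ∪ (−K). Then for every extreme point y of the closed unit ball with y ≠ x and y ≠ −x, and for every t ∈ (0,1), the vector (1−t) v_1 + t v_2 does not belong to y^⊥; that is, y is not Birkhoff–James orthogonal to (1−t) v_1 + t v_2. -/
/-- A normal cone: `K + K ⊆ K`, `αK ⊆ K` for all `α ≥ 0`, and `K ∩ (−K) = {0}`. -/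
def IsNormalCone {X : Type*} [NormedAddCommGroup X] [NormedSpace ℝ X] (K : Set X) : Prop :=
  (∀ x ∈ K, ∀ y ∈ K, x + y ∈ K) ∧ (∀ a : ℝ, 0 ≤ a → ∀ x ∈ K, a • x ∈ K) ∧
    K ∩ (-K) = {0}

/-!
In two dimensions a unit vector `x` is Birkhoff–James orthogonal to `w ≠ 0` exactly when some
functional `f ≤ ‖·‖` with `f x = 1` vanishes on `w`. If the extreme point `y` were orthogonal to
`w = (1 - t) v₁ + t v₂`, then, since also `x ⊥ w`, the unit vector `±y` equals `x + c w` with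
`c ≠ 0`. Testing it against the norming functionals at `x` that vanish on `v₁` and on `v₂` shows
that the coordinates of `x` in the basis `(v₁, v₂)` have the same sign, i.e. `x ∈ K ∪ (-K) = x^⊥`,
which is absurd. Here `v₁, v₂` are independent because `x^⊥` is not contained in a line: at a
vertex `x` of the polygon a norming functional can be tilted about `x`.
-/

open Module Set Metric Filter Topology

theorem Set.Finite.exists_pos_forall_sub_mul_le {ι : Type*} {s : Set ι} (hs : s.Finite)
    {g h : ι → ℝ} {c : ℝ} (hg : ∀ i ∈ s, g i ≤ c) (hh : ∀ i ∈ s, g i = c → 0 ≤ h i) :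
    ∃ ε > 0, ∀ i ∈ s, g i - ε * h i ≤ c := by
  have hev : ∀ᶠ ε in 𝓝[>] (0 : ℝ), ∀ i ∈ s, g i - ε * h i ≤ c := by
    rw [eventually_all_finite hs]
    intro i hi
    rcases (hg i hi).lt_or_eq with hlt | heq
    · have hlim : Tendsto (fun ε : ℝ => g i - ε * h i) (𝓝[>] 0) (𝓝 (g i)) :=
        tendsto_nhdsWithin_of_tendsto_nhds <|
          (by fun_prop : Continuous fun ε : ℝ => g i - ε * h i).tendsto' 0 _ (by simp)
      exact (hlim.eventually (gt_mem_nhds hlt)).mono fun _ => le_of_lt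
    · filter_upwards [self_mem_nhdsWithin] with ε (hε : 0 < ε)
      nlinarith [hh i hi heq]
  obtain ⟨ε, hε, hεpos⟩ := (hev.and self_mem_nhdsWithin).exists
  exact ⟨ε, hεpos, hε⟩

theorem eq_zero_of_add_smul_mem_of_sub_smul_mem {E : Type*} [AddCommGroup E] [Module ℝ E]
    {C : Set E} {x v : E} (hx : x ∈ C.extremePoints ℝ) {a b : ℝ} (ha : 0 < a) (hb : 0 < b)
    (h₁ : x + a • v ∈ C) (h₂ : x - b • v ∈ C) : v = 0 := by
  have hseg : x ∈ openSegment ℝ (x + a • v) (x - b • v) := by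
    refine ⟨b / (a + b), a / (a + b), by positivity, by positivity, by field_simp; ring, ?_⟩
    match_scalars <;> field_simp <;> ring
  have h := hx.2 h₁ h₂ hseg
  rw [add_eq_left, smul_eq_zero] at h
  exact h.resolve_left ha.ne'

theorem LinearIndependent.of_range_subset_span_range {K V ι : Type*} [DivisionRing K]
    [AddCommGroup V] [Module K V] [Fintype ι] {u v : ι → V} (hu : LinearIndependent K u)
    (h : range u ⊆ Submodule.span K (range v)) : LinearIndependent K v := by
  rw [linearIndependent_iff_card_eq_finrank_span] at hu ⊢
  refine le_antisymm ?_ (finrank_range_le_card v)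
  have := FiniteDimensional.span_of_finite K (finite_range v)
  rw [hu]
  exact Submodule.finrank_mono (Submodule.span_le.2 h)

section BirkhoffJames

variable {X : Type*} [NormedAddCommGroup X] [NormedSpace ℝ X]

theorem bjOrth_of_le_norm {f : X →ₗ[ℝ] ℝ} (hf : ∀ u, f u ≤ ‖u‖) {x w : X} (hfx : f x = ‖x‖)
    (hfw : f w = 0) : BJOrth x w := fun lam =>
  calc ‖x‖ = f (x + lam • w) := by simp [hfx, hfw]
  _ ≤ ‖x + lam • w‖ := hf _

theorem abs_le_norm_of_le_norm {f : X →ₗ[ℝ] ℝ} (hf : ∀ u, f u ≤ ‖u‖) (u : X) : |f u| ≤ ‖u‖ :=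
  abs_le.2 ⟨by simpa [neg_le] using hf (-u), hf u⟩

theorem bjOrth_self_iff {x : X} : BJOrth x x ↔ x = 0 := by
  refine ⟨fun h => norm_le_zero_iff.1 ?_, fun h lam => by simp [h]⟩
  simpa [show x + (-1 : ℝ) • x = 0 by module] using h (-1)

theorem BJOrth.linearIndependent {x w : X} (h : BJOrth x w) (hx : x ≠ 0) (hw : w ≠ 0) :
    LinearIndependent ℝ ![x, w] := by
  rw [linearIndependent_fin2]
  refine ⟨by simpa using hw, fun a hax => hx (norm_le_zero_iff.1 ?_)⟩
  have := h (-a)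
  rwa [show x + (-a) • w = 0 by simp at hax; rw [← hax]; module, norm_zero] at this

end BirkhoffJames

noncomputable def LinearIndependent.pairBasis {K V : Type*} [DivisionRing K] [AddCommGroup V]
    [Module K V] (hV : finrank K V = 2) {u v : V} (h : LinearIndependent K ![u, v]) :
    Basis (Fin 2) K V :=
  basisOfLinearIndependentOfCardEqFinrank h (by simp [hV])

@[simp]
theorem LinearIndependent.coe_pairBasis {K V : Type*} [DivisionRing K] [AddCommGroup V]
    [Module K V] (hV : finrank K V = 2) {u v : V} (h : LinearIndependent K ![u, v]) :
    ⇑(h.pairBasis hV) = ![u, v] :=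
  coe_basisOfLinearIndependentOfCardEqFinrank h _

@[simp]
theorem LinearIndependent.pairBasis_repr_left {K V : Type*} [DivisionRing K] [AddCommGroup V]
    [Module K V] (hV : finrank K V = 2) {u v : V} (h : LinearIndependent K ![u, v]) :
    (h.pairBasis hV).repr u = Finsupp.single 0 1 := by
  simpa using (h.pairBasis hV).repr_self 0

@[simp]
theorem LinearIndependent.pairBasis_repr_right {K V : Type*} [DivisionRing K] [AddCommGroup V]
    [Module K V] (hV : finrank K V = 2) {u v : V} (h : LinearIndependent K ![u, v]) :
    (h.pairBasis hV).repr v = Finsupp.single 1 1 := by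
  simpa using (h.pairBasis hV).repr_self 1

theorem LinearIndependent.eq_pairBasis_coord {K V : Type*} [Field K] [AddCommGroup V]
    [Module K V] (hV : finrank K V = 2) {u v : V} (h : LinearIndependent K ![u, v]) (z : V) :
    z = (h.pairBasis hV).coord 0 z • u + (h.pairBasis hV).coord 1 z • v := by
  conv_lhs => rw [← (h.pairBasis hV).sum_repr z]
  simp [Fin.sum_univ_two]

section TwoDimensional

variable {X : Type*} [NormedAddCommGroup X] [NormedSpace ℝ X]

def pairCone (v₁ v₂ : X) : Set X := {z | ∃ a b : ℝ, 0 ≤ a ∧ 0 ≤ b ∧ z = a • v₁ + b • v₂}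

theorem pairCone_union_neg_subset_span (v₁ v₂ : X) :
    pairCone v₁ v₂ ∪ -pairCone v₁ v₂ ⊆ Submodule.span ℝ (range ![v₁, v₂]) := by
  rw [Matrix.range_cons_cons_empty]
  rintro z (⟨a, b, -, -, rfl⟩ | ⟨a, b, -, -, hab⟩) <;> rw [SetLike.mem_coe, Submodule.mem_span_pair]
  · exact ⟨a, b, rfl⟩
  · exact ⟨-a, -b, by rw [neg_eq_iff_eq_neg.1 hab]; module⟩

theorem exists_eq_smul_add_smul (hX : finrank ℝ X = 2) {u v : X}
    (h : LinearIndependent ℝ ![u, v]) (z : X) : ∃ a b : ℝ, z = a • u + b • v :=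
  ⟨_, _, h.eq_pairBasis_coord hX z⟩

theorem exists_le_norm_of_bjOrth (hX : finrank ℝ X = 2) {x w : X} (hx : ‖x‖ = 1)
    (hw : w ≠ 0) (h : BJOrth x w) :
    ∃ f : X →ₗ[ℝ] ℝ, (∀ u, f u ≤ ‖u‖) ∧ f x = 1 ∧ f w = 0 := by
  have hind := h.linearIndependent (norm_ne_zero_iff.1 (by simp [hx])) hw
  set B := hind.pairBasis hX
  refine ⟨B.coord 0, fun u => ?_, by simp [B], by simp [B]⟩
  set a := B.coord 0 u
  set b := B.coord 1 u
  have hu : u = a • x + b • w := hind.eq_pairBasis_coord hX u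
  rcases le_or_gt a 0 with ha | ha
  · exact ha.trans (norm_nonneg u)
  calc a = a * ‖x‖ := by rw [hx, mul_one]
    _ ≤ a * ‖x + (b / a) • w‖ := mul_le_mul_of_nonneg_left (h _) ha.le
    _ = ‖a • (x + (b / a) • w)‖ := by rw [norm_smul, Real.norm_of_nonneg ha.le]
    _ = ‖u‖ := by rw [hu, smul_add, smul_smul, mul_div_cancel₀ _ ha.ne']

theorem exists_ne_zero_norm_add_smul_eq_one (hX : finrank ℝ X = 2) {x y w : X} (hx : ‖x‖ = 1)
    (hy : ‖y‖ = 1) (hyx : y ≠ x) (hyx' : y ≠ -x) (hw : w ≠ 0) (hxw : BJOrth x w)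
    (hyw : BJOrth y w) : ∃ c : ℝ, c ≠ 0 ∧ ‖x + c • w‖ = 1 := by
  obtain ⟨f, hf, hfx, hfw⟩ := exists_le_norm_of_bjOrth hX hx hw hxw
  obtain ⟨g, hg, hgy, hgw⟩ := exists_le_norm_of_bjOrth hX hy hw hyw
  obtain ⟨a, b, rfl⟩ :=
    exists_eq_smul_add_smul hX (hxw.linearIndependent (norm_ne_zero_iff.1 (by simp [hx])) hw) y
  have hagx : a * g x = 1 := by simpa [hgw] using hgy
  have hfy : f (a • x + b • w) = a := by simp [hfx, hfw]
  have ha : |a| ≤ 1 := hfy ▸ hy ▸ abs_le_norm_of_le_norm hf _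
  have hgx : |g x| ≤ 1 := hx ▸ abs_le_norm_of_le_norm hg x
  have hax : |a| * |g x| = 1 := by rw [← abs_mul, hagx, abs_one]
  rcases abs_eq zero_le_one |>.1 (by nlinarith [abs_nonneg a] : |a| = 1) with rfl | rfl
  · have hb : b ≠ 0 := by rintro rfl; simp at hyx
    exact ⟨b, hb, by simpa using hy⟩
  · have hb : b ≠ 0 := by rintro rfl; simp at hyx'
    exact ⟨-b, neg_ne_zero.2 hb, by rw [← hy, ← norm_neg]; congr 1; module⟩

theorem mul_nonpos_of_le_norm {f : X →ₗ[ℝ] ℝ} (hf : ∀ u, f u ≤ ‖u‖) {x z u v : X}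
    {p q a b : ℝ} (hfx : f x = 1) (hfv : f v = 0) (hx : x = p • v + q • u) (hz : ‖z‖ ≤ 1)
    (hzx : z = x + a • v + b • u) : b * q ≤ 0 := by
  have hq : q * f u = 1 := by rw [← hfx, hx]; simp [hfv]
  have hb : 1 + b * f u ≤ 1 := by
    simpa [hzx, hfx, hfv] using (hf z).trans hz
  have hbq : b * q = q ^ 2 * (b * f u) := by linear_combination (-(b * q)) * hq
  rw [hbq]
  exact mul_nonpos_of_nonneg_of_nonpos (sq_nonneg q) (by linarith)

theorem mem_pairCone_union_neg_of_bjOrth (hX : finrank ℝ X = 2) {x v₁ v₂ : X}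
    (hx : ‖x‖ = 1) (hv : LinearIndependent ℝ ![v₁, v₂]) (h₁ : BJOrth x v₁) (h₂ : BJOrth x v₂)
    {t c : ℝ} (ht : t ∈ Ioo 0 1) (hc : c ≠ 0) (hz : ‖x + c • ((1 - t) • v₁ + t • v₂)‖ ≤ 1) :
    x ∈ pairCone v₁ v₂ ∪ -pairCone v₁ v₂ := by
  obtain ⟨p, q, hpq⟩ := exists_eq_smul_add_smul hX hv x
  obtain ⟨f₁, hf₁, hf₁x, hf₁v⟩ := exists_le_norm_of_bjOrth hX hx (by simpa using hv.ne_zero 0) h₁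
  obtain ⟨f₂, hf₂, hf₂x, hf₂v⟩ := exists_le_norm_of_bjOrth hX hx (by simpa using hv.ne_zero 1) h₂
  have hq : (c * t) * q ≤ 0 :=
    mul_nonpos_of_le_norm (a := c * (1 - t)) hf₁ hf₁x hf₁v hpq hz (by module)
  have hp : (c * (1 - t)) * p ≤ 0 :=
    mul_nonpos_of_le_norm (a := c * t) hf₂ hf₂x hf₂v (by rw [hpq, add_comm]) hz (by module)
  obtain ⟨ht₀, ht₁⟩ := ht
  rcases hc.lt_or_gt with hc | hc
  · exact Or.inl ⟨p, q, by nlinarith [mul_neg_of_neg_of_pos hc (sub_pos.2 ht₁)],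
      by nlinarith [mul_neg_of_neg_of_pos hc ht₀], hpq⟩
  · refine Or.inr ⟨-p, -q, by nlinarith [mul_pos hc (sub_pos.2 ht₁)],
      by nlinarith [mul_pos hc ht₀], by rw [hpq]; module⟩

end TwoDimensional

section Polyhedral

variable {X : Type*} [NormedAddCommGroup X] [NormedSpace ℝ X]

theorem le_norm_of_forall_mem_extremePoints_le [FiniteDimensional ℝ X] {f : X →ₗ[ℝ] ℝ}
    (hf : ∀ e ∈ (closedBall (0 : X) 1).extremePoints ℝ, f e ≤ 1) (u : X) : f u ≤ ‖u‖ := by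
  have hball : closedBall (0 : X) 1 ⊆ {u | f u ≤ 1} := by
    rw [← closure_convexHull_extremePoints (isCompact_closedBall 0 1) (convex_closedBall 0 1)]
    exact closure_minimal (convexHull_min hf (convex_halfSpace_le f.isLinear 1))
      (isClosed_le f.continuous_of_finiteDimensional continuous_const)
  rcases eq_or_ne u 0 with rfl | hu
  · simp
  have h : f (‖u‖⁻¹ • u) ≤ 1 := hball (by simp [norm_smul, hu])
  rw [map_smul, smul_eq_mul] at h
  rwa [inv_mul_le_iff₀ (norm_pos_iff.2 hu), mul_one] at h

theorem exists_ne_zero_forall_sub_smul_le_norm [FiniteDimensional ℝ X]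
    (hpoly : ((closedBall (0 : X) 1).extremePoints ℝ).Finite) {x v : X}
    (hx : x ∈ (closedBall (0 : X) 1).extremePoints ℝ) (hv : v ≠ 0) {g φ : X →ₗ[ℝ] ℝ}
    (hg : ∀ u, g u ≤ ‖u‖) (hface : ∀ z, g z = 1 → z = x + φ z • v) :
    ∃ δ : ℝ, δ ≠ 0 ∧ ∀ u, (g - δ • φ) u ≤ ‖u‖ := by
  set E := (closedBall (0 : X) 1).extremePoints ℝ
  have hgE : ∀ e ∈ E, g e ≤ 1 := fun e he =>
    (hg e).trans (mem_closedBall_zero_iff.1 (extremePoints_subset he))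
  -- the face `{g = 1}` of the ball lies on one side of its extreme point `x`
  obtain ⟨σ, hσ, hsign⟩ : ∃ σ : ℝ, σ ≠ 0 ∧ ∀ e ∈ E, g e = 1 → 0 ≤ σ * φ e := by
    by_cases h : ∀ e ∈ E, g e = 1 → 0 ≤ φ e
    · exact ⟨1, one_ne_zero, by simpa using h⟩
    push Not at h
    obtain ⟨e', he', hge', hφe'⟩ := h
    refine ⟨-1, by norm_num, fun e he hge => ?_⟩
    by_contra! hφe
    refine hv (eq_zero_of_add_smul_mem_of_sub_smul_mem hx (a := φ e) (b := -φ e')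
      (by linarith) (by linarith) ?_ ?_)
    · exact hface e hge ▸ extremePoints_subset he
    · rw [neg_smul, sub_neg_eq_add, ← hface e' hge']
      exact extremePoints_subset he'
  obtain ⟨ε, hε, hεE⟩ := hpoly.exists_pos_forall_sub_mul_le hgE hsign
  refine ⟨ε * σ, mul_ne_zero hε.ne' hσ, le_norm_of_forall_mem_extremePoints_le fun e he => ?_⟩
  simpa [mul_assoc] using hεE e he

theorem exists_linearIndependent_bjOrth (hX : finrank ℝ X = 2)
    (hpoly : ((closedBall (0 : X) 1).extremePoints ℝ).Finite) {x : X}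
    (hx : x ∈ (closedBall (0 : X) 1).extremePoints ℝ) :
    ∃ u w : X, BJOrth x u ∧ BJOrth x w ∧ LinearIndependent ℝ ![u, w] := by
  have : FiniteDimensional ℝ X := .of_finrank_pos (by omega)
  have : Nontrivial X := Module.nontrivial_of_finrank_pos (R := ℝ) (by omega)
  have hx₁ : ‖x‖ = 1 := by simpa using extremePoints_closedBall_subset_sphere hx
  obtain ⟨g, hg₁, hgx⟩ := exists_dual_vector ℝ x (by simp [hx₁])
  replace hgx : g x = 1 := by simpa [hx₁] using hgx
  have hg : ∀ u, g u ≤ ‖u‖ := fun u =>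
    (Real.le_norm_self _).trans (by simpa [hg₁] using g.le_opNorm u)
  obtain ⟨v, hgv, hv⟩ := Submodule.exists_mem_ne_zero_of_ne_bot
    (LinearMap.ker_ne_bot_of_finrank_lt (f := (g : X →ₗ[ℝ] ℝ)) (by simp [hX]))
  replace hgv : g v = 0 := hgv
  have hx₀ : x ≠ 0 := by rintro rfl; simp at hx₁
  have hxv : BJOrth x v := bjOrth_of_le_norm (f := (g : X →ₗ[ℝ] ℝ)) hg (by simp [hgx, hx₁]) hgv
  have hind := hxv.linearIndependent hx₀ hv
  have hcoord : (hind.pairBasis hX).coord 0 = g :=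
    (hind.pairBasis hX).ext fun i => by fin_cases i <;> simp [hgx, hgv]
  have hface : ∀ z, g z = 1 → z = x + (hind.pairBasis hX).coord 1 z • v := fun z hz => by
    simpa only [hcoord, ContinuousLinearMap.coe_coe, hz, one_smul] using
      hind.eq_pairBasis_coord hX z
  obtain ⟨δ, hδ, hf⟩ := exists_ne_zero_forall_sub_smul_le_norm hpoly hx hv hg hface
  refine ⟨v + δ • x, v, bjOrth_of_le_norm hf ?_ ?_, hxv, ?_⟩
  · simp [hgx, hx₁]
  · simp [hgx, hgv]
  · rw [linearIndependent_fin2]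
    refine ⟨by simpa using hv, fun a h => hδ ?_⟩
    simpa [hgx, hgv, eq_comm] using congrArg g h

theorem linearIndependent_of_bjOrth_eq_pairCone_union_neg (hX : finrank ℝ X = 2)
    (hpoly : ((closedBall (0 : X) 1).extremePoints ℝ).Finite) {x v₁ v₂ : X}
    (hx : x ∈ (closedBall (0 : X) 1).extremePoints ℝ)
    (horth : {y | BJOrth x y} = pairCone v₁ v₂ ∪ -pairCone v₁ v₂) :
    LinearIndependent ℝ ![v₁, v₂] := by
  obtain ⟨u, w, hu, hw, huw⟩ := exists_linearIndependent_bjOrth hX hpoly hx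
  refine huw.of_range_subset_span_range (range_subset_iff.2 fun i => ?_)
  refine pairCone_union_neg_subset_span v₁ v₂ (horth ▸ ?_)
  fin_cases i
  exacts [hu, hw]

end Polyhedral

theorem stmt7_general {X : Type*} [NormedAddCommGroup X] [NormedSpace ℝ X]
    (hX : Module.finrank ℝ X = 2)
    (hpoly : (Set.extremePoints ℝ (Metric.closedBall (0 : X) 1)).Finite)
    (x : X) (hx : x ∈ Set.extremePoints ℝ (Metric.closedBall (0 : X) 1))
    (v₁ v₂ : X)
    (horth : {y : X | BJOrth x y} =
      {z : X | ∃ a b : ℝ, 0 ≤ a ∧ 0 ≤ b ∧ z = a • v₁ + b • v₂} ∪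
      (-{z : X | ∃ a b : ℝ, 0 ≤ a ∧ 0 ≤ b ∧ z = a • v₁ + b • v₂})) :
    ∀ y ∈ Set.extremePoints ℝ (Metric.closedBall (0 : X) 1), y ≠ x → y ≠ -x →
      ∀ t : ℝ, t ∈ Set.Ioo (0 : ℝ) 1 → ¬ BJOrth y ((1 - t) • v₁ + t • v₂) := by
  intro y hy hyx hyx' t ht hyw
  change {y | BJOrth x y} = pairCone v₁ v₂ ∪ -pairCone v₁ v₂ at horth
  have : Nontrivial X := Module.nontrivial_of_finrank_pos (R := ℝ) (by omega)
  have hx₁ : ‖x‖ = 1 := by simpa using extremePoints_closedBall_subset_sphere hx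
  have hy₁ : ‖y‖ = 1 := by simpa using extremePoints_closedBall_subset_sphere hy
  have hK (z : X) : BJOrth x z ↔ z ∈ pairCone v₁ v₂ ∪ -pairCone v₁ v₂ := Set.ext_iff.1 horth z
  have hv := linearIndependent_of_bjOrth_eq_pairCone_union_neg hX hpoly hx horth
  have hxK (a b : ℝ) (ha : 0 ≤ a) (hb : 0 ≤ b) : BJOrth x (a • v₁ + b • v₂) :=
    (hK _).2 (Or.inl ⟨a, b, ha, hb, rfl⟩)
  obtain ⟨c, hc, hxc⟩ := exists_ne_zero_norm_add_smul_eq_one hX hx₁ hy₁ hyx hyx'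
    (fun h => ht.1.ne' (LinearIndependent.pair_iff.1 hv _ _ h).2)
    (hxK _ _ (sub_nonneg.2 ht.2.le) ht.1.le) hyw
  have hxx : BJOrth x x := (hK x).2 <| mem_pairCone_union_neg_of_bjOrth hX hx₁ hv
    (by simpa using hxK 1 0) (by simpa using hxK 0 1) ht hc hxc.le
  exact (hx₁ ▸ one_ne_zero) (norm_eq_zero.2 (bjOrth_self_iff.1 hxx))

/-- In a two-dimensional real polyhedral Banach space, if `x` is an extreme
point of the closed unit ball and `v₁, v₂` are unit vectors such that the normal cone
`K = {α v₁ + β v₂ : α, β ≥ 0}` satisfies `x^⊥ = K ∪ (−K)`, then no extreme point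
`y ≠ ±x` is Birkhoff–James orthogonal to `(1−t) v₁ + t v₂` for any `t ∈ (0,1)`. -/
theorem stmt7 {X : Type*} [NormedAddCommGroup X] [NormedSpace ℝ X] [CompleteSpace X]
    (hX : Module.finrank ℝ X = 2)
    (hpoly : (Set.extremePoints ℝ (Metric.closedBall (0 : X) 1)).Finite)
    (x : X) (hx : x ∈ Set.extremePoints ℝ (Metric.closedBall (0 : X) 1))
    (v₁ v₂ : X) (hv₁ : ‖v₁‖ = 1) (hv₂ : ‖v₂‖ = 1)
    (hcone : IsNormalCone {z : X | ∃ a b : ℝ, 0 ≤ a ∧ 0 ≤ b ∧ z = a • v₁ + b • v₂})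
    (horth : {y : X | BJOrth x y} =
      {z : X | ∃ a b : ℝ, 0 ≤ a ∧ 0 ≤ b ∧ z = a • v₁ + b • v₂} ∪
      (-{z : X | ∃ a b : ℝ, 0 ≤ a ∧ 0 ≤ b ∧ z = a • v₁ + b • v₂})) :
    ∀ y ∈ Set.extremePoints ℝ (Metric.closedBall (0 : X) 1), y ≠ x → y ≠ -x →
      ∀ t : ℝ, t ∈ Set.Ioo (0 : ℝ) 1 → ¬ BJOrth y ((1 - t) • v₁ + t • v₂) :=
  stmt7_general hX hpoly x hx v₁ v₂ horth
end

section
/- Let X be a two-dimensional real polyhedral Banach space whose closed unit ball has exactly 2n extreme points, for some n ∈ ℕ. Then X has Property P_{n−1}: for every choice of n−1 unit vectors x_1, …, x_{n−1} in X, the union x_1^⊥ ∪ … ∪ x_{n−1}^⊥ is a proper subset of X. -/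
/-- Property `P_n`: for every `n` unit vectors, the union of their Birkhoff–James
orthogonality sets is a proper subset of the whole space. -/
def PropertyP (X : Type*) [NormedAddCommGroup X] [NormedSpace ℝ X] (n : ℕ) : Prop :=
  ∀ x : Fin n → X, (∀ i, ‖x i‖ = 1) → (⋃ i, {y : X | BJOrth (x i) y}) ≠ Set.univ

/-!
Among the `2n` extreme points of the unit ball there is one, `e`, different from
`±x₁, …, ±xₙ₋₁`. As the ball is a polytope, `e` is strictly exposed: some functional `f`
satisfies `f z < f e` for every other point `z` of the ball, so `|f xᵢ| < f e`. In
dimension two, `ker f` is a line `ℝ y`. If `xᵢ ⊥_B y`, the choice of `λ` with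
`xᵢ + λ y = (f xᵢ / f e) • e` gives `1 = ‖xᵢ‖ ≤ |f xᵢ| / f e < 1`; hence `y` lies in none
of the sets `xᵢ^⊥`.
-/

open Set Metric Module

theorem exists_mem_forall_ne_and_ne_neg {α : Type*} [InvolutiveNeg α] {s : Set α} {m : ℕ}
    (hm : 2 * m < s.ncard) (x : Fin m → α) : ∃ e ∈ s, ∀ i, x i ≠ e ∧ x i ≠ -e := by
  classical
  set T : Finset α := Finset.univ.image x ∪ Finset.univ.image (fun i => -x i)
  have hT : T.card ≤ 2 * m := by
    refine (Finset.card_union_le _ _).trans ?_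
    have h₁ := (Finset.card_image_le (s := Finset.univ) (f := x))
    have h₂ := (Finset.card_image_le (s := Finset.univ) (f := fun i => -x i))
    simp only [Finset.card_univ, Fintype.card_fin] at h₁ h₂
    omega
  obtain ⟨e, he, heT⟩ := exists_mem_notMem_of_ncard_lt_ncard (s := (T : Set α)) (t := s)
    (by rw [ncard_coe_finset]; omega)
  refine ⟨e, he, fun i => ⟨fun h => heT ?_, fun h => heT ?_⟩⟩
  · exact Finset.mem_union_left _ (Finset.mem_image.2 ⟨i, Finset.mem_univ _, h⟩)
  · exact Finset.mem_union_right _ (Finset.mem_image.2 ⟨i, Finset.mem_univ _, by simp [h]⟩)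

section LocallyConvex

variable {E : Type*} [AddCommGroup E] [Module ℝ E] [TopologicalSpace E] [T2Space E]
  [IsTopologicalAddGroup E] [ContinuousSMul ℝ E] [LocallyConvexSpace ℝ E]

theorem IsCompact.convexHull_extremePoints_eq_of_finite {s : Set E} (hs : IsCompact s)
    (hconv : Convex ℝ s) (hfin : (s.extremePoints ℝ).Finite) :
    convexHull ℝ (s.extremePoints ℝ) = s := by
  rw [← (hfin.isClosed_convexHull ℝ).closure_eq]
  exact closure_convexHull_extremePoints hs hconv

theorem exists_forall_lt_of_mem_extremePoints_convexHull {s : Set E} (hs : s.Finite) {e : E}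
    (he : e ∈ (convexHull ℝ s).extremePoints ℝ) :
    ∃ f : StrongDual ℝ E, ∀ z ∈ convexHull ℝ s, z ≠ e → f z < f e := by
  have heK : e ∉ convexHull ℝ (s \ {e}) := fun h =>
    ((convex_convexHull ℝ s).mem_extremePoints_iff_mem_sdiff_convexHull_sdiff.1 he).2 <|
      convexHull_mono (sdiff_subset_sdiff_left (subset_convexHull ℝ s)) h
  obtain ⟨f, u, hfK, hue⟩ := geometric_hahn_banach_closed_point (convex_convexHull ℝ _)
    (hs.sdiff.isClosed_convexHull ℝ) heK
  refine ⟨f, fun z hz hze => ?_⟩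
  have hs' : s = insert e (s \ {e}) := (insert_sdiff_self_of_mem
    (extremePoints_convexHull_subset he)).symm
  rcases (s \ {e}).eq_empty_or_nonempty with h | h
  · rw [hs', h, insert_empty_eq, convexHull_singleton] at hz
    exact absurd hz hze
  rw [hs', convexHull_insert h, convexJoin_singleton_left, mem_iUnion₂] at hz
  obtain ⟨w, hw, a, b, ha, hb, hab, rfl⟩ := hz
  have hb0 : b ≠ 0 := by
    rintro rfl
    rw [add_zero] at hab
    simp [hab] at hze
  have hfw : b * f w < b * f e :=
    mul_lt_mul_of_pos_left ((hfK w hw).trans hue) (lt_of_le_of_ne hb (Ne.symm hb0))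
  rw [eq_sub_of_add_eq hab, map_add, map_smul, map_smul, smul_eq_mul, smul_eq_mul]
  linarith

end LocallyConvex

theorem Module.Dual.exists_ker_le_span_singleton {K V : Type*} [Field K] [AddCommGroup V]
    [Module K V] (hV : finrank K V = 2) {f : Module.Dual K V} (hf : f ≠ 0) :
    ∃ y : V, LinearMap.ker f ≤ K ∙ y := by
  have : FiniteDimensional K V := Module.finite_of_finrank_eq_succ hV
  have hker : finrank K (LinearMap.ker f) ≤ 1 := by
    have := f.finrank_ker_add_one_of_ne_zero hf
    omega
  obtain ⟨v, hv⟩ := finrank_le_one_iff.1 hker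
  refine ⟨v, fun w hw => Submodule.mem_span_singleton.2 ?_⟩
  obtain ⟨c, hc⟩ := hv ⟨w, hw⟩
  exact ⟨c, congrArg Subtype.val hc⟩

theorem BJOrth.norm_le_of_ker_le_span {E : Type*} [NormedAddCommGroup E] [NormedSpace ℝ E]
    {f : StrongDual ℝ E} {x y z : E} (h : BJOrth x y)
    (hker : LinearMap.ker (f : E →ₗ[ℝ] ℝ) ≤ ℝ ∙ y)
    (hxz : f x = f z) : ‖x‖ ≤ ‖z‖ := by
  obtain ⟨c, hc⟩ := Submodule.mem_span_singleton.1 <|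
    hker (show z - x ∈ LinearMap.ker (f : E →ₗ[ℝ] ℝ) by simp [hxz])
  simpa [hc] using h c

theorem exists_forall_not_bjOrth_of_forall_lt {X : Type*} [NormedAddCommGroup X] [NormedSpace ℝ X]
    (hX : finrank ℝ X = 2) {e : X} (he : ‖e‖ = 1) {f : StrongDual ℝ X}
    (hf : ∀ z ∈ closedBall (0 : X) 1, z ≠ e → f z < f e) :
    ∃ y : X, ∀ x : X, ‖x‖ = 1 → x ≠ e → x ≠ -e → ¬ BJOrth x y := by
  have hfe : 0 < f e := by
    simpa using hf 0 (mem_closedBall_self zero_le_one) (ne_of_apply_ne norm (by simp [he]))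
  obtain ⟨y, hy⟩ := Module.Dual.exists_ker_le_span_singleton hX
    (f := (f : X →ₗ[ℝ] ℝ)) (fun h => hfe.ne' (by simpa using LinearMap.congr_fun h e))
  refine ⟨y, fun x hx hxe hxe' hxy => ?_⟩
  have hfx : |f x| < f e := by
    have h₁ := hf x (by simp [hx]) hxe
    have h₂ := hf (-x) (by simp [hx]) (fun h => hxe' (neg_eq_iff_eq_neg.1 h))
    rw [map_neg] at h₂
    exact abs_lt.2 ⟨by linarith, h₁⟩
  have hle := BJOrth.norm_le_of_ker_le_span hxy (z := (f x / f e) • e) hy (by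
    rw [map_smul, smul_eq_mul, div_mul_cancel₀ _ hfe.ne'])
  rw [norm_smul, he, mul_one, Real.norm_eq_abs, abs_div, abs_of_pos hfe, hx,
    one_le_div hfe] at hle
  linarith

theorem stmt8_general {X : Type*} [NormedAddCommGroup X] [NormedSpace ℝ X]
    (hX : Module.finrank ℝ X = 2) (n : ℕ)
    (hpoly : (Set.extremePoints ℝ (Metric.closedBall (0 : X) 1)).Finite)
    (hcard : (Set.extremePoints ℝ (Metric.closedBall (0 : X) 1)).ncard = 2 * n) :
    PropertyP X (n - 1) := by
  have : FiniteDimensional ℝ X := Module.finite_of_finrank_eq_succ hX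
  have : Nontrivial X := Module.nontrivial_of_finrank_eq_succ hX
  have hball := (isCompact_closedBall (0 : X) 1).convexHull_extremePoints_eq_of_finite
    (convex_closedBall 0 1) hpoly
  have hn : n ≠ 0 := by
    rintro rfl
    have hne := (isCompact_closedBall (0 : X) 1).extremePoints_nonempty
      (nonempty_closedBall.2 zero_le_one)
    exact ((ncard_pos hpoly).2 hne).ne' hcard
  intro x hx hcover
  obtain ⟨e, he, hxe⟩ := exists_mem_forall_ne_and_ne_neg
    (s := extremePoints ℝ (closedBall (0 : X) 1)) (by omega) x
  obtain ⟨f, hf⟩ := exists_forall_lt_of_mem_extremePoints_convexHull hpoly (hball.symm ▸ he)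
  rw [hball] at hf
  obtain ⟨y, hy⟩ := exists_forall_not_bjOrth_of_forall_lt hX
    (mem_sphere_zero_iff_norm.1 (extremePoints_closedBall_subset_sphere he)) hf
  obtain ⟨i, hi⟩ := mem_iUnion.1 (hcover ▸ mem_univ y)
  exact hy (x i) (hx i) (hxe i).1 (hxe i).2 hi

/-- A two-dimensional real polyhedral Banach space whose closed unit ball has
exactly `2n` extreme points has Property `P_{n−1}`. -/
theorem stmt8 {X : Type*} [NormedAddCommGroup X] [NormedSpace ℝ X] [CompleteSpace X]
    (hX : Module.finrank ℝ X = 2) (n : ℕ)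
    (hpoly : (Set.extremePoints ℝ (Metric.closedBall (0 : X) 1)).Finite)
    (hcard : (Set.extremePoints ℝ (Metric.closedBall (0 : X) 1)).ncard = 2 * n) :
    PropertyP X (n - 1) :=
  stmt8_general hX n hpoly hcard
end

section
/- Let X be a real polyhedral Banach space (the closed unit ball of X has only finitely many extreme points) that does not have Property P_n for some n ∈ ℕ, i.e., there exist unit vectors x_1, …, x_n in X with x_1^⊥ ∪ … ∪ x_n^⊥ = X. Then for any real Banach space Y, the space X ⊕_∞ Y (the product X × Y with norm ‖(x,y)‖ = max{‖x‖, ‖y‖}) does not have Property P_n; indeed, (x_1,0)^⊥ ∪ … ∪ (x_n,0)^⊥ = X ⊕_∞ Y. -/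
/-- If `X` is a real polyhedral Banach space failing Property `P_n`, witnessed
by unit vectors `x_1, …, x_n` with `x_1^⊥ ∪ … ∪ x_n^⊥ = X`, then for any real Banach space
`Y`, the space `X ⊕_∞ Y` (the product with the max norm, which is the standard product norm)
fails Property `P_n`; indeed `(x_1,0)^⊥ ∪ … ∪ (x_n,0)^⊥ = X ⊕_∞ Y`. -/
theorem stmt9 {X Y : Type*} [NormedAddCommGroup X] [NormedSpace ℝ X] [CompleteSpace X]
    [NormedAddCommGroup Y] [NormedSpace ℝ Y] [CompleteSpace Y]
    (hpoly : (Set.extremePoints ℝ (Metric.closedBall (0 : X) 1)).Finite)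
    (n : ℕ) (x : Fin n → X) (hunit : ∀ i, ‖x i‖ = 1)
    (hcover : (⋃ i, {y : X | BJOrth (x i) y}) = Set.univ) :
    (⋃ i, {z : X × Y | BJOrth (x i, (0 : Y)) z}) = Set.univ ∧ ¬ PropertyP (X × Y) n := by
  have hcov : (⋃ i, {z : X × Y | BJOrth (x i, (0 : Y)) z}) = Set.univ := by
    ext ⟨y, w⟩
    simp only [Set.mem_iUnion, Set.mem_setOf_eq, Set.mem_univ, iff_true]
    have : y ∈ (⋃ i, {y : X | BJOrth (x i) y}) := hcover ▸ Set.mem_univ y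
    obtain ⟨i, hi⟩ := Set.mem_iUnion.mp this
    refine ⟨i, fun lam => ?_⟩
    have h1 : ‖((x i, (0 : Y)) : X × Y)‖ = ‖x i‖ := by
      simp [Prod.norm_def]
    have h2 : ‖((x i, (0 : Y)) : X × Y) + lam • (y, w)‖ = max ‖x i + lam • y‖ ‖lam • w‖ := by
      simp [Prod.norm_def]
    rw [h1, h2]
    exact le_trans (hi lam) (le_max_left _ _)
  refine ⟨hcov, fun hP => ?_⟩
  exact hP (fun i => (x i, 0)) (fun i => by simp [Prod.norm_def, hunit i]) hcov
end

section
/- Let X and Y be real polyhedral Banach spaces (closed unit balls with only finitely many extreme points) such that X does not have Property P_n for some n ∈ ℕ and Y does not have Property P_m for some m ∈ ℕ. Then X ⊕_∞ Y (the product X × Y with norm ‖(x,y)‖ = max{‖x‖, ‖y‖}) does not have Property P_r, where r = min{m, n}. -/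
/-- If `X`, `Y` are real polyhedral Banach spaces such that `X` fails
Property `P_n` and `Y` fails Property `P_m`, then `X ⊕_∞ Y` (the product with the max norm,
which is the standard product norm) fails Property `P_r`, where `r = min{m, n}`. -/
theorem stmt10 {X Y : Type*} [NormedAddCommGroup X] [NormedSpace ℝ X] [CompleteSpace X]
    [NormedAddCommGroup Y] [NormedSpace ℝ Y] [CompleteSpace Y]
    (hpolyX : (Set.extremePoints ℝ (Metric.closedBall (0 : X) 1)).Finite)
    (hpolyY : (Set.extremePoints ℝ (Metric.closedBall (0 : Y) 1)).Finite)
    (n m : ℕ) (hX : ¬ PropertyP X n) (hY : ¬ PropertyP Y m) :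
    ¬ PropertyP (X × Y) (min m n) := by
  unfold PropertyP at *
  push_neg at hX hY ⊢
  obtain ⟨x, hx1, hxU⟩ := hX
  obtain ⟨y, hy1, hyU⟩ := hY
  rcases le_total m n with h | h
  · -- min m n = m : use the family (0, y j)
    have e : min m n = m := min_eq_left h
    refine ⟨fun j => ((0 : X), y (Fin.cast e j)), ?_, ?_⟩
    · intro j
      simp [Prod.norm_def, hy1]
    · ext p
      simp only [Set.mem_iUnion, Set.mem_setOf_eq, Set.mem_univ, iff_true]
      have : p.2 ∈ (⋃ j, {v : Y | BJOrth (y j) v}) := hyU ▸ Set.mem_univ _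
      obtain ⟨j, hj⟩ := Set.mem_iUnion.mp this
      refine ⟨Fin.cast e.symm j, fun lam => ?_⟩
      have h1 : ‖((0 : X), y (Fin.cast e (Fin.cast e.symm j)))‖ = 1 := by
        simp [Prod.norm_def, hy1]
      have h2 : Fin.cast e (Fin.cast e.symm j) = j := rfl
      rw [h1, h2]
      calc (1 : ℝ) = ‖y j‖ := (hy1 j).symm
        _ ≤ ‖y j + lam • p.2‖ := hj lam
        _ ≤ ‖((0 : X), y j) + lam • p‖ := by
            rw [Prod.norm_def]
            exact le_max_right _ _
  · -- min m n = n : use the family (x i, 0)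
    have e : min m n = n := min_eq_right h
    refine ⟨fun i => (x (Fin.cast e i), (0 : Y)), ?_, ?_⟩
    · intro i
      simp [Prod.norm_def, hx1]
    · ext p
      simp only [Set.mem_iUnion, Set.mem_setOf_eq, Set.mem_univ, iff_true]
      have : p.1 ∈ (⋃ i, {u : X | BJOrth (x i) u}) := hxU ▸ Set.mem_univ _
      obtain ⟨i, hi⟩ := Set.mem_iUnion.mp this
      refine ⟨Fin.cast e.symm i, fun lam => ?_⟩
      have h1 : ‖(x (Fin.cast e (Fin.cast e.symm i)), (0 : Y))‖ = 1 := by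
        simp [Prod.norm_def, hx1]
      have h2 : Fin.cast e (Fin.cast e.symm i) = i := rfl
      rw [h1, h2]
      calc (1 : ℝ) = ‖x i‖ := (hx1 i).symm
        _ ≤ ‖x i + lam • p.1‖ := hi lam
        _ ≤ ‖(x i, (0 : Y)) + lam • p‖ := by
            rw [Prod.norm_def]
            exact le_max_left _ _
end

section
/- For every natural number n ≥ 2, the space ℓ_∞^n (ℝ^n with the supremum norm ‖x‖ = max_i |x_i|) does not have Property P_2; that is, there exist unit vectors u, v in ℓ_∞^n such that u^⊥ ∪ v^⊥ = ℓ_∞^n. -/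
/-- For `n ≥ 2`, the space `ℓ_∞^n` (here `Fin n → ℝ` with the sup norm)
does not have Property `P_2`: there are unit vectors `u, v` with `u^⊥ ∪ v^⊥` all of the
space. -/
theorem stmt11 (n : ℕ) (hn : 2 ≤ n) :
    ¬ PropertyP (Fin n → ℝ) 2 ∧
    ∃ u v : Fin n → ℝ, ‖u‖ = 1 ∧ ‖v‖ = 1 ∧
      ({y : Fin n → ℝ | BJOrth u y} ∪ {y : Fin n → ℝ | BJOrth v y}) = Set.univ := by
  have h0 : 0 < n := by omega
  have h1 : 1 < n := by omega
  set i0 : Fin n := ⟨0, h0⟩ with hi0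
  set i1 : Fin n := ⟨1, h1⟩ with hi1
  have hne : i0 ≠ i1 := by simp [hi0, hi1, Fin.ext_iff]
  set u : Fin n → ℝ := fun i => if i = i0 ∨ i = i1 then 1 else 0 with hu
  set v : Fin n → ℝ := fun i => if i = i0 then 1 else if i = i1 then -1 else 0 with hv
  have hui0 : u i0 = 1 := by simp [hu]
  have hui1 : u i1 = 1 := by simp [hu]
  have hvi0 : v i0 = 1 := by simp [hv]
  have hvi1 : v i1 = -1 := by simp [hv, hne.symm]
  -- norms
  have hnu : ‖u‖ = 1 := by
    apply le_antisymm
    · rw [pi_norm_le_iff_of_nonneg (by norm_num)]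
      intro i
      rw [Real.norm_eq_abs, hu]
      dsimp only
      split_ifs <;> simp
    · calc (1:ℝ) = ‖u i0‖ := by rw [hui0]; simp
        _ ≤ ‖u‖ := norm_le_pi_norm u i0
  have hnv : ‖v‖ = 1 := by
    apply le_antisymm
    · rw [pi_norm_le_iff_of_nonneg (by norm_num)]
      intro i
      rw [Real.norm_eq_abs, hv]
      dsimp only
      split_ifs <;> simp
    · calc (1:ℝ) = ‖v i0‖ := by rw [hvi0]; simp
        _ ≤ ‖v‖ := norm_le_pi_norm v i0
  -- generic coordinate lower bound
  have coord : ∀ (w y : Fin n → ℝ) (lam : ℝ) (i : Fin n),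
      (1:ℝ) ≤ |w i + lam * y i| → 1 ≤ ‖w + lam • y‖ := by
    intro w y lam i h
    calc (1:ℝ) ≤ |w i + lam * y i| := h
      _ = ‖(w + lam • y) i‖ := by simp [Real.norm_eq_abs]
      _ ≤ ‖w + lam • y‖ := norm_le_pi_norm _ i
  -- u orthogonal to y when y i0 * y i1 ≤ 0
  have hOu : ∀ y : Fin n → ℝ, y i0 * y i1 ≤ 0 → BJOrth u y := by
    intro y hy lam
    rw [hnu]
    have key : 0 ≤ lam * y i0 ∨ 0 ≤ lam * y i1 := by
      by_contra h
      push_neg at h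
      nlinarith [mul_pos_of_neg_of_neg h.1 h.2,
        mul_nonpos_of_nonneg_of_nonpos (sq_nonneg lam) hy]
    rcases key with h | h
    · exact coord u y lam i0 (by rw [hui0, abs_of_nonneg (by linarith)]; linarith)
    · exact coord u y lam i1 (by rw [hui1, abs_of_nonneg (by linarith)]; linarith)
  -- v orthogonal to y when 0 ≤ y i0 * y i1
  have hOv : ∀ y : Fin n → ℝ, 0 ≤ y i0 * y i1 → BJOrth v y := by
    intro y hy lam
    rw [hnv]
    have key : 0 ≤ lam * y i0 ∨ lam * y i1 ≤ 0 := by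
      by_contra h
      push_neg at h
      nlinarith [mul_neg_of_neg_of_pos h.1 h.2,
        mul_nonneg (sq_nonneg lam) hy]
    rcases key with h | h
    · exact coord v y lam i0 (by rw [hvi0, abs_of_nonneg (by linarith)]; linarith)
    · exact coord v y lam i1 (by rw [hvi1, abs_of_nonpos (by linarith)]; linarith)
  have hcover : ({y : Fin n → ℝ | BJOrth u y} ∪ {y : Fin n → ℝ | BJOrth v y}) = Set.univ := by
    apply Set.eq_univ_of_forall
    intro y
    rcases le_total (y i0 * y i1) 0 with h | h
    · exact Or.inl (hOu y h)
    · exact Or.inr (hOv y h)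
  constructor
  · intro hP
    apply hP ![u, v]
    · intro i
      fin_cases i <;> simpa
    · apply Set.eq_univ_of_forall
      intro y
      rw [Set.mem_iUnion]
      have : y ∈ ({y : Fin n → ℝ | BJOrth u y} ∪ {y : Fin n → ℝ | BJOrth v y}) := by
        rw [hcover]; trivial
      rcases this with h | h
      · exact ⟨0, by simpa using h⟩
      · exact ⟨1, by simpa using h⟩
  · exact ⟨u, v, hnu, hnv, hcover⟩
end

section
/- Let X be a real polyhedral Banach space (the closed unit ball of X has only finitely many extreme points) that does not have Property P_n for some n ∈ ℕ, i.e., there exist unit vectors x_1, …, x_n in X with x_1^⊥ ∪ … ∪ x_n^⊥ = X. Then for any real Banach space Y, the space X ⊕_1 Y (the product X × Y with norm ‖(x,y)‖ = ‖x‖ + ‖y‖) does not have Property P_n. Moreover, if Y is a polyhedral Banach space that does not have Property P_m for some m ∈ ℕ, then X ⊕_1 Y does not have Property P_r, where r = min{m, n}. -/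
lemma norm_pair_L1 {X Y : Type*} [NormedAddCommGroup X] [NormedSpace ℝ X]
    [NormedAddCommGroup Y] [NormedSpace ℝ Y] (a : X) (b : Y) :
    ‖((WithLp.equiv 1 (X × Y)).symm (a, b))‖ = ‖a‖ + ‖b‖ := by
  rw [WithLp.prod_norm_eq_add (by norm_num)]
  simp

lemma leftOrth_L1 {X Y : Type*} [NormedAddCommGroup X] [NormedSpace ℝ X]
    [NormedAddCommGroup Y] [NormedSpace ℝ Y] (x u : X) (w : Y) (h : BJOrth x u) :
    BJOrth ((WithLp.equiv 1 (X × Y)).symm (x, 0)) ((WithLp.equiv 1 (X × Y)).symm (u, w)) := by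
  intro lam
  have h1 : ((WithLp.equiv 1 (X × Y)).symm (x, 0)) + lam • ((WithLp.equiv 1 (X × Y)).symm (u, w))
      = (WithLp.equiv 1 (X × Y)).symm (x + lam • u, 0 + lam • w) := rfl
  rw [h1, norm_pair_L1, norm_pair_L1, norm_zero, zero_add]
  have := h lam
  have := norm_nonneg (lam • w)
  linarith

lemma rightOrth_L1 {X Y : Type*} [NormedAddCommGroup X] [NormedSpace ℝ X]
    [NormedAddCommGroup Y] [NormedSpace ℝ Y] (y w : Y) (u : X) (h : BJOrth y w) :
    BJOrth ((WithLp.equiv 1 (X × Y)).symm (0, y)) ((WithLp.equiv 1 (X × Y)).symm (u, w)) := by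
  intro lam
  have h1 : ((WithLp.equiv 1 (X × Y)).symm (0, y)) + lam • ((WithLp.equiv 1 (X × Y)).symm (u, w))
      = (WithLp.equiv 1 (X × Y)).symm (0 + lam • u, y + lam • w) := rfl
  rw [h1, norm_pair_L1, norm_pair_L1, norm_zero, zero_add, zero_add]
  have := h lam
  have := norm_nonneg (lam • u)
  linarith

lemma keyX_L1 {X Y : Type*} [NormedAddCommGroup X] [NormedSpace ℝ X]
    [NormedAddCommGroup Y] [NormedSpace ℝ Y] (n : ℕ) (hX : ¬ PropertyP X n) :
    ¬ PropertyP (WithLp 1 (X × Y)) n := by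
  unfold PropertyP at hX ⊢
  push_neg at hX ⊢
  obtain ⟨x, hx1, hx2⟩ := hX
  refine ⟨fun i => (WithLp.equiv 1 (X × Y)).symm (x i, 0), fun i => by
    rw [norm_pair_L1, hx1 i, norm_zero, add_zero], ?_⟩
  apply Set.eq_univ_iff_forall.2
  intro p
  have : (WithLp.equiv 1 (X × Y) p).1 ∈ ⋃ i, {y : X | BJOrth (x i) y} :=
    hx2 ▸ Set.mem_univ _
  obtain ⟨i, hi⟩ := Set.mem_iUnion.1 this
  exact Set.mem_iUnion.2 ⟨i, leftOrth_L1 (x i) _ (WithLp.equiv 1 (X × Y) p).2 hi⟩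

lemma keyY_L1 {X Y : Type*} [NormedAddCommGroup X] [NormedSpace ℝ X]
    [NormedAddCommGroup Y] [NormedSpace ℝ Y] (m : ℕ) (hY : ¬ PropertyP Y m) :
    ¬ PropertyP (WithLp 1 (X × Y)) m := by
  unfold PropertyP at hY ⊢
  push_neg at hY ⊢
  obtain ⟨y, hy1, hy2⟩ := hY
  refine ⟨fun i => (WithLp.equiv 1 (X × Y)).symm (0, y i), fun i => by
    rw [norm_pair_L1, hy1 i, norm_zero, zero_add], ?_⟩
  apply Set.eq_univ_iff_forall.2
  intro p
  have : (WithLp.equiv 1 (X × Y) p).2 ∈ ⋃ i, {z : Y | BJOrth (y i) z} :=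
    hy2 ▸ Set.mem_univ _
  obtain ⟨i, hi⟩ := Set.mem_iUnion.1 this
  exact Set.mem_iUnion.2 ⟨i, rightOrth_L1 (y i) _ (WithLp.equiv 1 (X × Y) p).1 hi⟩

/-- If `X` is a real polyhedral Banach space failing Property `P_n`, then for
any real Banach space `Y`, the space `X ⊕_1 Y` (the product `X × Y` with the norm
`‖(x,y)‖ = ‖x‖ + ‖y‖`, i.e. `WithLp 1 (X × Y)`) fails Property `P_n`.  Moreover, if `Y` is
a polyhedral Banach space failing Property `P_m`, then `X ⊕_1 Y` fails Property `P_r` with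
`r = min{m, n}`. -/
theorem stmt12 {X Y : Type*} [NormedAddCommGroup X] [NormedSpace ℝ X] [CompleteSpace X]
    [NormedAddCommGroup Y] [NormedSpace ℝ Y] [CompleteSpace Y]
    (hpolyX : (Set.extremePoints ℝ (Metric.closedBall (0 : X) 1)).Finite)
    (n : ℕ) (hX : ¬ PropertyP X n) :
    (¬ PropertyP (WithLp 1 (X × Y)) n) ∧
    (∀ m : ℕ, (Set.extremePoints ℝ (Metric.closedBall (0 : Y) 1)).Finite →
      ¬ PropertyP Y m → ¬ PropertyP (WithLp 1 (X × Y)) (min m n)) := by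
  refine ⟨keyX_L1 n hX, fun m _ hY => ?_⟩
  rcases le_total m n with h | h
  · rw [min_eq_left h]; exact keyY_L1 m hY
  · rw [min_eq_right h]; exact keyX_L1 n hX
end

section
/- For every natural number n ≥ 2, the space ℓ_1^n (ℝ^n with the norm ‖x‖ = |x_1| + ⋯ + |x_n|) does not have Property P_2; that is, there exist unit vectors u, v in ℓ_1^n such that u^⊥ ∪ v^⊥ = ℓ_1^n. -/
/-!
The standard basis vector `eᵢ` of `ℓ₁` is Birkhoff–James orthogonal to every `y` whose `i`-th
coordinate is dominated by the others, `|yᵢ| ≤ ∑_{j ≠ i} |yⱼ|`: indeed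
`‖eᵢ + λ y‖ = |1 + λ yᵢ| + |λ| ∑_{j ≠ i} |yⱼ| ≥ |1 + λ yᵢ| + |λ yᵢ| ≥ 1`.
For `i ≠ k`, if `y` fails this for `i`, then `|yₖ| ≤ ∑_{j ≠ i} |yⱼ| < |yᵢ|`, so it holds for `k`.
Hence `eᵢ^⊥ ∪ eₖ^⊥` is the whole space.
-/

theorem not_propertyP_two_of_union_eq_univ {X : Type*} [NormedAddCommGroup X] [NormedSpace ℝ X]
    {u v : X} (hu : ‖u‖ = 1) (hv : ‖v‖ = 1)
    (huv : {y : X | BJOrth u y} ∪ {y : X | BJOrth v y} = Set.univ) :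
    ¬ PropertyP X 2 := by
  intro hP
  refine hP ![u, v] (Fin.forall_fin_two.mpr ⟨hu, hv⟩) ?_
  rw [← huv]
  ext y
  simp [Fin.exists_fin_two]

namespace PiLp

variable {ι : Type*} [Fintype ι] [DecidableEq ι]

theorem norm_eq_norm_add_sum_erase_of_L1 {β : ι → Type*} [∀ i, SeminormedAddCommGroup (β i)]
    (x : PiLp 1 β) (i : ι) : ‖x‖ = ‖x i‖ + ∑ j ∈ Finset.univ.erase i, ‖x j‖ := by
  rw [norm_eq_of_L1, Finset.add_sum_erase _ (fun j => ‖x j‖) (Finset.mem_univ i)]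

theorem bjOrth_single_one_of_L1 {i : ι} {y : PiLp 1 (fun _ : ι => ℝ)}
    (hy : ‖y i‖ ≤ ∑ j ∈ Finset.univ.erase i, ‖y j‖) :
    BJOrth (single 1 i 1 : PiLp 1 fun _ : ι => ℝ) y := by
  intro lam
  have hrest : ∑ j ∈ Finset.univ.erase i, ‖((single 1 i 1 : PiLp 1 fun _ : ι => ℝ) + lam • y) j‖
      = ‖lam‖ * ∑ j ∈ Finset.univ.erase i, ‖y j‖ := by
    rw [Finset.mul_sum]
    refine Finset.sum_congr rfl fun j hj => ?_
    simp [Finset.ne_of_mem_erase hj]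
  calc ‖(single 1 i 1 : PiLp 1 fun _ : ι => ℝ)‖ = ‖(1 + lam * y i) - lam * y i‖ := by simp
    _ ≤ ‖1 + lam * y i‖ + ‖lam‖ * ‖y i‖ := by rw [← norm_mul]; exact norm_sub_le _ _
    _ ≤ ‖1 + lam * y i‖ + ‖lam‖ * ∑ j ∈ Finset.univ.erase i, ‖y j‖ := by gcongr
    _ = ‖(single 1 i 1 : PiLp 1 fun _ : ι => ℝ) + lam • y‖ := by
      rw [norm_eq_norm_add_sum_erase_of_L1 _ i, hrest]
      simp

theorem bjOrth_single_one_or_of_L1 {i k : ι} (hik : i ≠ k) (y : PiLp 1 (fun _ : ι => ℝ)) :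
    BJOrth (single 1 i 1 : PiLp 1 fun _ : ι => ℝ) y ∨
      BJOrth (single 1 k 1 : PiLp 1 fun _ : ι => ℝ) y := by
  have single_le (l m : ι) (hlm : l ≠ m) : ‖y m‖ ≤ ∑ j ∈ Finset.univ.erase l, ‖y j‖ :=
    Finset.single_le_sum (fun j _ => norm_nonneg (y j))
      (Finset.mem_erase.mpr ⟨hlm.symm, Finset.mem_univ m⟩)
  by_cases hi : ‖y i‖ ≤ ∑ j ∈ Finset.univ.erase i, ‖y j‖
  · exact .inl (bjOrth_single_one_of_L1 hi)
  · refine .inr (bjOrth_single_one_of_L1 ?_)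
    linarith [single_le i k hik, single_le k i hik.symm]

end PiLp

/-- For `n ≥ 2`, the space `ℓ_1^n` (here `PiLp 1 (fun _ : Fin n => ℝ)`, i.e.
`ℝ^n` with the norm `‖x‖ = |x_1| + ⋯ + |x_n|`) does not have Property `P_2`: there are unit
vectors `u, v` with `u^⊥ ∪ v^⊥` all of the space. -/
theorem stmt13 (n : ℕ) (hn : 2 ≤ n) :
    ¬ PropertyP (PiLp 1 (fun _ : Fin n => ℝ)) 2 ∧
    ∃ u v : PiLp 1 (fun _ : Fin n => ℝ), ‖u‖ = 1 ∧ ‖v‖ = 1 ∧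
      ({y : PiLp 1 (fun _ : Fin n => ℝ) | BJOrth u y} ∪
        {y : PiLp 1 (fun _ : Fin n => ℝ) | BJOrth v y}) = Set.univ := by
  have hne : (⟨0, by omega⟩ : Fin n) ≠ ⟨1, by omega⟩ := by simp
  have hunit (i : Fin n) : ‖(PiLp.single 1 i 1 : PiLp 1 fun _ : Fin n => ℝ)‖ = 1 := by
    simp [PiLp.norm_single]
  have hunion : {y | BJOrth (PiLp.single 1 _ 1 : PiLp 1 fun _ : Fin n => ℝ) y} ∪
      {y | BJOrth (PiLp.single 1 _ 1 : PiLp 1 fun _ : Fin n => ℝ) y} = Set.univ :=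
    Set.eq_univ_of_forall (PiLp.bjOrth_single_one_or_of_L1 hne)
  exact ⟨not_propertyP_two_of_union_eq_univ (hunit _) (hunit _) hunion,
    _, _, hunit _, hunit _, hunion⟩
end

section
/- Fix an integer n ≥ 2. Let X be ℝ³ equipped with the norm ‖(x,y,z)‖ = max over j ∈ {0, 1, …, 2n−1} of max{ (|cos((2j+1)π/(2n))| |x| + |sin((2j+1)π/(2n))| |y|) / cos(π/(2n)), |z| } (so that the unit ball of X is the prism with vertices (cos(jπ/n), sin(jπ/n), ±1), j = 0, 1, …, 2n−1). Then X does not have Property P_2; indeed, (1,0,1)^⊥ ∪ (−1,0,1)^⊥ = X. -/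
open scoped Real

lemma cos_abs_le (n j : ℕ) (hn : 2 ≤ n) (hj : j < 2 * n) :
    |Real.cos ((2 * (j : ℝ) + 1) * π / (2 * (n : ℝ)))| ≤ Real.cos (π / (2 * (n : ℝ))) := by
  have hn0 : (0:ℝ) < n := by
    have : 0 < n := by omega
    exact_mod_cast this
  set δ : ℝ := π / (2 * n) with hδdef
  have hδpos : 0 < δ := by positivity
  have hθ : (2 * (j : ℝ) + 1) * π / (2 * (n : ℝ)) = (2 * (j:ℝ) + 1) * δ := by
    rw [hδdef]; ring
  have hnδ : (n:ℝ) * δ = π / 2 := by rw [hδdef]; field_simp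
  have h2n : (2 * (n:ℝ)) * δ = π := by rw [hδdef]; field_simp
  have hj' : (j:ℝ) + 1 ≤ 2 * (n:ℝ) := by exact_mod_cast hj
  have m2 : ((j:ℝ)+1) * δ ≤ (2*(n:ℝ)) * δ := mul_le_mul_of_nonneg_right hj' hδpos.le
  have mj : (j:ℝ) * δ ≤ ((j:ℝ)+1) * δ := by nlinarith
  rw [hθ, abs_le]
  have hsin1 : 0 ≤ Real.sin ((j:ℝ) * δ) := by
    apply Real.sin_nonneg_of_nonneg_of_le_pi
    · positivity
    · linarith
  have hsin2 : 0 ≤ Real.sin (((j:ℝ)+1) * δ) := by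
    apply Real.sin_nonneg_of_nonneg_of_le_pi
    · positivity
    · linarith
  constructor
  · have e1 : (((2*(j:ℝ)+1)*δ) + δ)/2 = ((j:ℝ)+1)*δ := by ring
    have e2 : (((2*(j:ℝ)+1)*δ) - δ)/2 = (j:ℝ)*δ := by ring
    have key : Real.cos ((2*(j:ℝ)+1)*δ) + Real.cos δ
        = 2 * Real.cos (((j:ℝ)+1)*δ) * Real.cos ((j:ℝ)*δ) := by
      rw [Real.cos_add_cos, e1, e2]
    rcases lt_or_ge j n with h | h
    · have hjn : (j:ℝ) + 1 ≤ n := by exact_mod_cast h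
      have m1 : ((j:ℝ)+1) * δ ≤ (n:ℝ) * δ := mul_le_mul_of_nonneg_right hjn hδpos.le
      have c1 : 0 ≤ Real.cos (((j:ℝ)+1)*δ) := by
        apply Real.cos_nonneg_of_mem_Icc
        constructor
        · have : (0:ℝ) ≤ ((j:ℝ)+1)*δ := by positivity
          linarith [Real.pi_pos]
        · linarith
      have c2 : 0 ≤ Real.cos ((j:ℝ)*δ) := by
        apply Real.cos_nonneg_of_mem_Icc
        constructor
        · have : (0:ℝ) ≤ (j:ℝ)*δ := by positivity
          linarith [Real.pi_pos]
        · linarith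
      nlinarith
    · have hjn : (n:ℝ) ≤ j := by exact_mod_cast h
      have m1 : (n:ℝ) * δ ≤ (j:ℝ) * δ := mul_le_mul_of_nonneg_right hjn hδpos.le
      have c1 : Real.cos (((j:ℝ)+1)*δ) ≤ 0 := by
        apply Real.cos_nonpos_of_pi_div_two_le_of_le
        · linarith
        · linarith [Real.pi_pos]
      have c2 : Real.cos ((j:ℝ)*δ) ≤ 0 := by
        apply Real.cos_nonpos_of_pi_div_two_le_of_le
        · linarith
        · linarith [Real.pi_pos]
      nlinarith
  · have e1 : (δ + (2*(j:ℝ)+1)*δ)/2 = ((j:ℝ)+1)*δ := by ring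
    have e2 : (δ - (2*(j:ℝ)+1)*δ)/2 = -((j:ℝ)*δ) := by ring
    have key : Real.cos δ - Real.cos ((2*(j:ℝ)+1)*δ)
        = 2 * Real.sin (((j:ℝ)+1)*δ) * Real.sin ((j:ℝ)*δ) := by
      rw [Real.cos_sub_cos, e1, e2, Real.sin_neg]; ring
    nlinarith

/-- Let `n ≥ 2` and let `X` be `ℝ³` (identified via a linear equivalence `e`
with `ℝ × ℝ × ℝ`) with the prism norm
`‖(x,y,z)‖ = max_{0 ≤ j ≤ 2n−1} max{(|cos((2j+1)π/2n)||x| + |sin((2j+1)π/2n)||y|)/cos(π/2n), |z|}`.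
Then `X` fails Property `P_2`; indeed `(1,0,1)^⊥ ∪ (−1,0,1)^⊥ = X`. -/
theorem stmt14 {X : Type*} [NormedAddCommGroup X] [NormedSpace ℝ X]
    (n : ℕ) (hn : 2 ≤ n) (e : X ≃ₗ[ℝ] ℝ × ℝ × ℝ)
    (hnorm : ∀ v : X, ‖v‖ =
      (Finset.range (2 * n)).sup' (Finset.nonempty_range_iff.mpr (by omega))
        (fun j => max
          ((|Real.cos ((2 * (j : ℝ) + 1) * π / (2 * (n : ℝ)))| * |(e v).1| +
            |Real.sin ((2 * (j : ℝ) + 1) * π / (2 * (n : ℝ)))| * |(e v).2.1|) /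
              Real.cos (π / (2 * (n : ℝ))))
          |(e v).2.2|)) :
    ¬ PropertyP X 2 ∧
    ({w : X | BJOrth (e.symm (1, 0, 1)) w} ∪ {w : X | BJOrth (e.symm (-1, 0, 1)) w}) =
      Set.univ := by
  have hn0 : (0:ℝ) < n := by
    have : 0 < n := by omega
    exact_mod_cast this
  have hδlt : π / (2 * (n:ℝ)) < π / 2 := by
    have hn2 : (2:ℝ) ≤ (n:ℝ) := by exact_mod_cast hn
    rw [div_lt_div_iff₀ (by positivity) (by norm_num)]
    nlinarith [Real.pi_pos, hn2]
  have hcosδ : 0 < Real.cos (π / (2 * (n:ℝ))) := by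
    apply Real.cos_pos_of_mem_Ioo
    constructor
    · have : (0:ℝ) < π / (2*(n:ℝ)) := by positivity
      linarith [Real.pi_pos]
    · exact hδlt
  have h0mem : (0:ℕ) ∈ Finset.range (2*n) := Finset.mem_range.mpr (by omega)
  have harg : (2 * ((0:ℕ):ℝ) + 1) * π / (2 * (n:ℝ)) = π / (2 * (n:ℝ)) := by norm_num
  have hx : ∀ v : X, |(e v).1| ≤ ‖v‖ := by
    intro v
    rw [hnorm v]
    refine le_trans ?_ (Finset.le_sup' _ h0mem)
    rw [harg, abs_of_pos hcosδ]
    refine le_trans ?_ (le_max_left _ _)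
    rw [le_div_iff₀ hcosδ]
    have := mul_nonneg (abs_nonneg (Real.sin (π / (2 * (n : ℝ))))) (abs_nonneg (e v).2.1)
    nlinarith [abs_nonneg (e v).1]
  have hz : ∀ v : X, |(e v).2.2| ≤ ‖v‖ := by
    intro v
    rw [hnorm v]
    refine le_trans ?_ (Finset.le_sup' _ h0mem)
    exact le_max_right _ _
  have hunit : ∀ s : ℝ, |s| = 1 → ‖e.symm (s, 0, 1)‖ = 1 := by
    intro s hs
    apply le_antisymm
    · rw [hnorm]
      apply Finset.sup'_le
      intro j hj
      simp only [LinearEquiv.apply_symm_apply]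
      apply max_le
      · rw [div_le_one hcosδ]
        have h1 := cos_abs_le n j hn (Finset.mem_range.mp hj)
        have h2 : |Real.sin ((2 * (j : ℝ) + 1) * π / (2 * (n : ℝ)))| * |(0:ℝ)| = 0 := by
          simp
        rw [hs]
        nlinarith
      · norm_num
    · have := hz (e.symm (s, 0, 1))
      simp only [LinearEquiv.apply_symm_apply] at this
      simpa using this
  have cover : ∀ w : X, BJOrth (e.symm (1, 0, 1)) w ∨ BJOrth (e.symm (-1, 0, 1)) w := by
    intro w
    set a := (e w).1 with ha
    set c := (e w).2.2 with hc
    have comp1 : ∀ (s lam : ℝ), (e (e.symm (s, 0, 1) + lam • w)).1 = s + lam * a := by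
      intro s lam; simp [ha]
    have comp3 : ∀ (s lam : ℝ), (e (e.symm (s, 0, 1) + lam • w)).2.2 = 1 + lam * c := by
      intro s lam; simp [hc]
    by_cases hac : a * c ≤ 0
    · left
      intro lam
      rw [hunit 1 (by norm_num)]
      have hor : 0 ≤ lam * a ∨ 0 ≤ lam * c := by
        by_contra hcon
        push_neg at hcon
        nlinarith [mul_pos_of_neg_of_neg hcon.1 hcon.2,
          mul_nonneg (mul_self_nonneg lam) (neg_nonneg.2 hac)]
      rcases hor with h | h
      · calc (1:ℝ) ≤ |1 + lam * a| := le_trans (by linarith) (le_abs_self _)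
          _ = |(e (e.symm ((1:ℝ), (0:ℝ), (1:ℝ)) + lam • w)).1| := by rw [comp1]
          _ ≤ _ := hx _
      · calc (1:ℝ) ≤ |1 + lam * c| := le_trans (by linarith) (le_abs_self _)
          _ = |(e (e.symm ((1:ℝ), (0:ℝ), (1:ℝ)) + lam • w)).2.2| := by rw [comp3]
          _ ≤ _ := hz _
    · right
      push_neg at hac
      intro lam
      rw [hunit (-1) (by norm_num)]
      by_cases h : 0 ≤ lam * c
      · calc (1:ℝ) ≤ |1 + lam * c| := le_trans (by linarith) (le_abs_self _)
          _ = |(e (e.symm ((-1:ℝ), (0:ℝ), (1:ℝ)) + lam • w)).2.2| := by rw [comp3]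
          _ ≤ _ := hz _
      · push_neg at h
        have hlamne : lam ≠ 0 := by
          intro h0
          rw [h0, zero_mul] at h
          exact lt_irrefl 0 h
        have hla : lam * a < 0 := by
          nlinarith [mul_pos (mul_self_pos.mpr hlamne) hac]
        calc (1:ℝ) ≤ |-1 + lam * a| := by
              rw [abs_of_neg (by linarith)]; linarith
          _ = |(e (e.symm ((-1:ℝ), (0:ℝ), (1:ℝ)) + lam • w)).1| := by rw [comp1]
          _ ≤ _ := hx _
  have huniv : ({w : X | BJOrth (e.symm (1, 0, 1)) w}
      ∪ {w : X | BJOrth (e.symm (-1, 0, 1)) w}) = Set.univ := by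
    apply Set.eq_univ_of_forall
    intro w
    rcases cover w with h | h
    · exact Or.inl h
    · exact Or.inr h
  refine ⟨?_, huniv⟩
  intro hP
  apply hP ![e.symm (1, 0, 1), e.symm (-1, 0, 1)]
  · intro i
    fin_cases i
    · simpa using hunit 1 (by norm_num)
    · simpa using hunit (-1) (by norm_num)
  · apply Set.eq_univ_of_forall
    intro w
    rcases cover w with h | h
    · exact Set.mem_iUnion.mpr ⟨0, by simpa using h⟩
    · exact Set.mem_iUnion.mpr ⟨1, by simpa using h⟩
end

section
/- Let X be ℝ³ equipped with the norm ‖(x,y,z)‖ = max{ |x|, |y|, |x|/2 + |z|/2, |y|/2 + |z|/2 } (so that the unit ball of X is the polyhedron with vertices ±(1,1,±1), ±(−1,1,±1) and ±(0,0,2), obtained by gluing two pyramids onto the opposite square faces of a right square prism). Then X does not have Property P_2; indeed, (1,1,1)^⊥ ∪ (1,−1,1)^⊥ = X. -/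
/-- Key lemma: if a linear functional given by coefficients `(a, b, 0)` has
`|a| + |b| ≤ s`, takes value `s > 0` at `x`, vanishes at `w`, and `‖x‖ ≤ 1`, then
`x ⊥_B w`. -/
lemma bjkey {X : Type*} [NormedAddCommGroup X] [NormedSpace ℝ X]
    (e : X ≃ₗ[ℝ] ℝ × ℝ × ℝ)
    (hnorm : ∀ v : X, ‖v‖ =
      max (max |(e v).1| |(e v).2.1|)
        (max (|(e v).1| / 2 + |(e v).2.2| / 2) (|(e v).2.1| / 2 + |(e v).2.2| / 2)))
    (x w : X) (a b s : ℝ) (hs : 0 < s) (hab : |a| + |b| ≤ s) (hxn : ‖x‖ ≤ 1)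
    (hx : a * (e x).1 + b * (e x).2.1 = s)
    (hw : a * (e w).1 + b * (e w).2.1 = 0) : BJOrth x w := by
  intro lam
  set v := x + lam • w with hv
  have h1 : e v = e x + lam • e w := by simp [hv]
  have hp : (e v).1 = (e x).1 + lam * (e w).1 := by rw [h1]; rfl
  have hq : (e v).2.1 = (e x).2.1 + lam * (e w).2.1 := by rw [h1]; rfl
  have hP : |(e v).1| ≤ ‖v‖ := by
    rw [hnorm v]; exact le_max_of_le_left (le_max_left _ _)
  have hQ : |(e v).2.1| ≤ ‖v‖ := by
    rw [hnorm v]; exact le_max_of_le_left (le_max_right _ _)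
  have key : a * (e v).1 + b * (e v).2.1 = s := by
    rw [hp, hq]; linear_combination hx + lam * hw
  have h2 : a * (e v).1 ≤ |a| * |(e v).1| := by
    calc a * (e v).1 ≤ |a * (e v).1| := le_abs_self _
    _ = |a| * |(e v).1| := abs_mul _ _
  have h3 : b * (e v).2.1 ≤ |b| * |(e v).2.1| := by
    calc b * (e v).2.1 ≤ |b * (e v).2.1| := le_abs_self _
    _ = |b| * |(e v).2.1| := abs_mul _ _
  have h4 : |a| * |(e v).1| ≤ |a| * ‖v‖ := mul_le_mul_of_nonneg_left hP (abs_nonneg a)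
  have h5 : |b| * |(e v).2.1| ≤ |b| * ‖v‖ := mul_le_mul_of_nonneg_left hQ (abs_nonneg b)
  have h6 : (|a| + |b|) * ‖v‖ ≤ s * ‖v‖ := mul_le_mul_of_nonneg_right hab (norm_nonneg v)
  -- s ≤ s * ‖v‖, hence 1 ≤ ‖v‖
  nlinarith [norm_nonneg v]

/-- Let `X` be `ℝ³` (identified via a linear equivalence `e` with
`ℝ × ℝ × ℝ`) with the norm `‖(x,y,z)‖ = max{|x|, |y|, |x|/2 + |z|/2, |y|/2 + |z|/2}`
(unit ball: a square prism with pyramids glued on the two square faces).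
Then `X` fails Property `P_2`; indeed `(1,1,1)^⊥ ∪ (1,−1,1)^⊥ = X`. -/
theorem stmt15 {X : Type*} [NormedAddCommGroup X] [NormedSpace ℝ X]
    (e : X ≃ₗ[ℝ] ℝ × ℝ × ℝ)
    (hnorm : ∀ v : X, ‖v‖ =
      max (max |(e v).1| |(e v).2.1|)
        (max (|(e v).1| / 2 + |(e v).2.2| / 2) (|(e v).2.1| / 2 + |(e v).2.2| / 2))) :
    ¬ PropertyP X 2 ∧
    ({w : X | BJOrth (e.symm (1, 1, 1)) w} ∪ {w : X | BJOrth (e.symm (1, -1, 1)) w}) =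
      Set.univ := by
  have he1 : e (e.symm (1, 1, 1)) = ((1 : ℝ), (1 : ℝ), (1 : ℝ)) := e.apply_symm_apply _
  have he2 : e (e.symm (1, -1, 1)) = ((1 : ℝ), (-1 : ℝ), (1 : ℝ)) := e.apply_symm_apply _
  have hn1 : ‖(e.symm (1, 1, 1) : X)‖ = 1 := by
    rw [hnorm, he1]; norm_num
  have hn2 : ‖(e.symm (1, -1, 1) : X)‖ = 1 := by
    rw [hnorm, he2]; norm_num
  have hmain : ∀ w : X, BJOrth (e.symm (1, 1, 1)) w ∨ BJOrth (e.symm (1, -1, 1)) w := by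
    intro w
    set u := (e w).1 with hu
    set v := (e w).2.1 with hv
    by_cases hu0 : u = 0
    · left
      apply bjkey e hnorm _ w 1 0 1 one_pos (by norm_num) hn1.le
      · rw [he1]; norm_num
      · simp [← hu, hu0]
    rcases le_or_gt (u * v) 0 with h | h
    · left
      rcases mul_nonpos_iff.mp h with ⟨h1, h2⟩ | ⟨h1, h2⟩
      · -- 0 ≤ u, v ≤ 0, u > 0
        have hupos : 0 < u := lt_of_le_of_ne h1 (Ne.symm hu0)
        apply bjkey e hnorm _ w (-v) u (u - v) (by linarith) ?_ hn1.le
        · rw [he1]; ring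
        · rw [← hu, ← hv]; ring
        · rw [abs_of_nonneg (by linarith : (0:ℝ) ≤ -v), abs_of_nonneg h1]
          linarith
      · -- u ≤ 0, 0 ≤ v, u < 0
        have huneg : u < 0 := lt_of_le_of_ne h1 hu0
        apply bjkey e hnorm _ w v (-u) (v - u) (by linarith) ?_ hn1.le
        · rw [he1]; ring
        · rw [← hu, ← hv]; ring
        · rw [abs_of_nonneg h2, abs_of_nonneg (by linarith : (0:ℝ) ≤ -u)]
          linarith
    · right
      rcases mul_pos_iff.mp h with ⟨h1, h2⟩ | ⟨h1, h2⟩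
      · -- both positive
        apply bjkey e hnorm _ w v (-u) (u + v) (by linarith) ?_ hn2.le
        · rw [he2]; ring
        · rw [← hu, ← hv]; ring
        · rw [abs_of_nonneg h2.le, abs_of_nonpos (by linarith : -u ≤ (0:ℝ))]
          linarith
      · -- both negative
        apply bjkey e hnorm _ w (-v) u (-u - v) (by linarith) ?_ hn2.le
        · rw [he2]; ring
        · rw [← hu, ← hv]; ring
        · rw [abs_of_nonneg (by linarith : (0:ℝ) ≤ -v), abs_of_nonpos h1.le]
          linarith
  have hunion : ({w : X | BJOrth (e.symm (1, 1, 1)) w} ∪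
      {w : X | BJOrth (e.symm (1, -1, 1)) w}) = Set.univ := by
    apply Set.eq_univ_of_forall
    intro w
    rcases hmain w with h | h
    · exact Or.inl h
    · exact Or.inr h
  refine ⟨?_, hunion⟩
  intro hP
  apply hP ![e.symm (1, 1, 1), e.symm (1, -1, 1)]
  · intro i
    fin_cases i <;> simpa using (by first | exact hn1 | exact hn2)
  · apply Set.eq_univ_of_forall
    intro w
    rcases hmain w with h | h
    · exact Set.mem_iUnion.mpr ⟨0, h⟩
    · exact Set.mem_iUnion.mpr ⟨1, h⟩
end

section
/- Fix an integer n ≥ 3. Let X be ℝ³ equipped with the norm ‖(x,y,z)‖ = max over j ∈ {0, 1, …, 2n−1} of max{ (|cos((2j+1)π/(2n))| |x| + |sin((2j+1)π/(2n))| |y|) / cos(π/(2n)), (|cos((2j+1)π/(2n))| |x| + |sin((2j+1)π/(2n))| |y|) / (2 cos(π/(2n))) + |z|/2 } (so that the unit ball of X is the polyhedron with vertices (cos(jπ/n), sin(jπ/n), ±1), j = 0, …, 2n−1, together with (0,0,±2)). Then X has Property P_2: for every two unit vectors u, v ∈ X, the union u^⊥ ∪ v^⊥ is a proper subset of X. 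-/
open scoped Real

set_option maxHeartbeats 1000000

section Aux
open Finset

noncomputable section AuxP2

/-- half-vertex angle -/
def ang (n : ℕ) : ℝ := π / (2 * n)
/-- facet directions -/
def th (n j : ℕ) : ℝ := (2 * (j:ℝ) + 1) * π / (2 * n)
/-- linear facet functionals -/
def LL (n j : ℕ) (p : ℝ × ℝ) : ℝ :=
  (Real.cos (th n j) * p.1 + Real.sin (th n j) * p.2) / Real.cos (ang n)
/-- polygon norm -/
def PP (n : ℕ) (p : ℝ × ℝ) : ℝ :=
  (insert 0 (Finset.range (2*n))).sup' (insert_nonempty _ _) (fun j => LL n j p)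

lemma range_ne (n : ℕ) (hn : 3 ≤ n) : (Finset.range (2*n)).Nonempty :=
  nonempty_range_iff.mpr (by omega)

lemma PP_eq {n : ℕ} (hn : 3 ≤ n) (p : ℝ × ℝ) :
    PP n p = (Finset.range (2*n)).sup' (range_ne n hn) (fun j => LL n j p) := by
  unfold PP
  exact Finset.sup'_congr _ (Finset.insert_eq_self.mpr (Finset.mem_range.mpr (by omega)))
    (fun _ _ => rfl)

lemma ang_pos {n : ℕ} (hn : 3 ≤ n) : 0 < ang n := by
  have : (0:ℝ) < n := by exact_mod_cast Nat.lt_of_lt_of_le (by norm_num) hn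
  unfold ang; positivity

lemma ang_le {n : ℕ} (hn : 3 ≤ n) : ang n ≤ π / 6 := by
  have h3 : (3:ℝ) ≤ n := by exact_mod_cast hn
  have : (0:ℝ) < n := by linarith
  unfold ang
  rw [div_le_div_iff₀ (by linarith) (by norm_num)]
  nlinarith [Real.pi_pos]

lemma cos_ang_pos {n : ℕ} (hn : 3 ≤ n) : 0 < Real.cos (ang n) := by
  apply Real.cos_pos_of_mem_Ioo
  constructor
  · have := ang_pos hn; linarith [Real.pi_pos]
  · have := ang_le hn; linarith [Real.pi_pos]

lemma th_eq (n j : ℕ) : th n j = (2*(j:ℝ)+1) * ang n := by unfold th ang; ring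

lemma th_pos {n : ℕ} (hn : 3 ≤ n) (j : ℕ) : 0 < th n j := by
  rw [th_eq]; have := ang_pos hn; positivity

lemma th_lt {n : ℕ} (hn : 3 ≤ n) {j : ℕ} (hj : j < 2*n) : th n j < 2*π := by
  rw [th_eq]
  have h1 : (2*(j:ℝ)+1) < 4*n := by
    have : (j:ℝ)+1 ≤ 2*n := by exact_mod_cast hj
    linarith
  have h2 : 4*(n:ℝ) * ang n = 2*π := by
    have hnn : (n:ℝ) ≠ 0 := by positivity
    unfold ang; field_simp; ring
  calc (2*(j:ℝ)+1) * ang n < 4*n * ang n := by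
        exact mul_lt_mul_of_pos_right h1 (ang_pos hn)
    _ = 2*π := h2

lemma four_n_ang {n : ℕ} (hn : 3 ≤ n) : 4*(n:ℝ) * ang n = 2*π := by
  have hnn : (n:ℝ) ≠ 0 := by positivity
  unfold ang; field_simp; ring

lemma LL_add_smul (n j : ℕ) (p q : ℝ × ℝ) (l : ℝ) :
    LL n j (p + l • q) = LL n j p + l * LL n j q := by
  simp only [LL, Prod.fst_add, Prod.snd_add, Prod.smul_fst, Prod.smul_snd, smul_eq_mul]
  ring

lemma LL_smul (n j : ℕ) (p : ℝ × ℝ) (l : ℝ) : LL n j (l • p) = l * LL n j p := by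
  simp only [LL, Prod.smul_fst, Prod.smul_snd, smul_eq_mul]; ring

lemma LL_neg (n j : ℕ) (p : ℝ × ℝ) : LL n j (-p) = -(LL n j p) := by
  simp only [LL, Prod.fst_neg, Prod.snd_neg]; ring

lemma le_PP {n : ℕ} (hn : 3 ≤ n) {j : ℕ} (hj : j ∈ Finset.range (2*n)) (p : ℝ × ℝ) :
    LL n j p ≤ PP n p := by
  rw [PP_eq hn]; exact Finset.le_sup' (fun j => LL n j p) hj

lemma PP_zero (n : ℕ) : PP n 0 = 0 := by
  unfold PP
  rw [show (fun j => LL n j 0) = fun _ => (0:ℝ) from funext (fun j => by simp [LL])]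
  exact Finset.sup'_const (insert_nonempty _ _) (0:ℝ)

lemma PP_smul {n : ℕ} (hn : 3 ≤ n) {c : ℝ} (hc : 0 ≤ c) (p : ℝ × ℝ) :
    PP n (c • p) = c * PP n p := by
  apply le_antisymm
  · rw [PP_eq hn]
    apply Finset.sup'_le
    intro j hj
    rw [LL_smul]
    exact mul_le_mul_of_nonneg_left (le_PP hn hj p) hc
  · obtain ⟨j, hj, hEq⟩ := Finset.exists_mem_eq_sup' (range_ne n hn) (fun j => LL n j p)
    rw [PP_eq hn, hEq, ← LL_smul]
    exact le_PP hn hj _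


def tau (n j : ℕ) : ℕ := if j < n then j + n else j - n

lemma tau_mem {n j : ℕ} (hn : 3 ≤ n) (hj : j < 2*n) : tau n j < 2*n := by
  unfold tau; split <;> omega

lemma th_tau {n : ℕ} (hn : 3 ≤ n) {j : ℕ} (hj : j < 2*n) :
    Real.cos (th n (tau n j)) = -Real.cos (th n j) ∧
    Real.sin (th n (tau n j)) = -Real.sin (th n j) := by
  have hnn : (n:ℝ) ≠ 0 := by positivity
  unfold tau
  split
  · have h : th n (j + n) = th n j + π := by
      unfold th; push_cast; field_simp; ring
    rw [h, Real.cos_add_pi, Real.sin_add_pi]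
    exact ⟨rfl, rfl⟩
  · rename_i hge
    have hnj : n ≤ j := by omega
    have h : th n (j - n) = th n j - π := by
      unfold th
      have : ((j - n : ℕ) : ℝ) = (j:ℝ) - n := by
        push_cast [Nat.cast_sub hnj]; ring
      rw [this]; field_simp; ring
    rw [h, Real.cos_sub_pi, Real.sin_sub_pi]
    exact ⟨rfl, rfl⟩

lemma LL_tau {n : ℕ} (hn : 3 ≤ n) {j : ℕ} (hj : j < 2*n) (p : ℝ × ℝ) :
    LL n (tau n j) p = -(LL n j p) := by
  obtain ⟨hc, hs⟩ := th_tau hn hj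
  unfold LL
  rw [hc, hs]; ring

lemma PP_neg {n : ℕ} (hn : 3 ≤ n) (p : ℝ × ℝ) : PP n (-p) = PP n p := by
  have key : ∀ q : ℝ × ℝ, PP n (-q) ≤ PP n q := by
    intro q
    rw [PP_eq hn]
    apply Finset.sup'_le
    intro j hj
    rw [LL_neg, ← LL_tau hn (Finset.mem_range.mp hj)]
    exact le_PP hn (Finset.mem_range.mpr (tau_mem hn (Finset.mem_range.mp hj))) q
  have h2 := key (-p)
  rw [neg_neg] at h2
  exact le_antisymm (key p) h2

lemma PP_smul_abs {n : ℕ} (hn : 3 ≤ n) (c : ℝ) (p : ℝ × ℝ) :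
    PP n (c • p) = |c| * PP n p := by
  rcases le_or_gt 0 c with h | h
  · rw [abs_of_nonneg h]; exact PP_smul hn h p
  · have : c • p = (-c) • (-p) := by simp
    rw [this, PP_smul hn (by linarith) (-p), PP_neg hn, abs_of_neg h]

lemma polar {p : ℝ × ℝ} (hp : p ≠ 0) :
    ∃ R φ : ℝ, 0 < R ∧ -π < φ ∧ φ ≤ π ∧ p.1 = R * Real.cos φ ∧ p.2 = R * Real.sin φ := by
  have hR2 : 0 < p.1^2 + p.2^2 := by
    rcases Prod.mk.injEq .. ▸ (fun h => hp (Prod.ext_iff.mpr h)) with _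
    by_contra h
    push_neg at h
    have h1 : p.1 = 0 := by nlinarith [sq_nonneg p.1, sq_nonneg p.2]
    have h2 : p.2 = 0 := by nlinarith [sq_nonneg p.1, sq_nonneg p.2]
    exact hp (Prod.ext_iff.mpr ⟨h1, h2⟩)
  set R := Real.sqrt (p.1^2 + p.2^2) with hRdef
  have hR : 0 < R := Real.sqrt_pos.mpr hR2
  have hRsq : R^2 = p.1^2 + p.2^2 := Real.sq_sqrt hR2.le
  have ha1 : -1 ≤ p.1 / R := by
    rw [le_div_iff₀ hR]
    nlinarith [sq_nonneg (p.1 + R), sq_nonneg p.2]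
  have ha2 : p.1 / R ≤ 1 := by
    rw [div_le_one hR]
    nlinarith [sq_nonneg (p.1 - R), sq_nonneg p.2]
  have hsin : Real.sqrt (1 - (p.1/R)^2) = |p.2| / R := by
    have : 1 - (p.1/R)^2 = (p.2/R)^2 := by
      field_simp
      nlinarith [hRsq]
    rw [this, Real.sqrt_sq_eq_abs, abs_div, abs_of_pos hR]
  rcases le_or_gt 0 p.2 with hb | hb
  · refine ⟨R, Real.arccos (p.1/R), hR, ?_, Real.arccos_le_pi _, ?_, ?_⟩
    · have := Real.arccos_nonneg (p.1/R); linarith [Real.pi_pos]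
    · rw [Real.cos_arccos ha1 ha2]; field_simp
    · rw [Real.sin_arccos, hsin, abs_of_nonneg hb]; field_simp
  · refine ⟨R, -Real.arccos (p.1/R), hR, ?_, ?_, ?_, ?_⟩
    · have hlt : Real.arccos (p.1/R) < π := by
        rcases lt_or_eq_of_le (Real.arccos_le_pi (p.1/R)) with h | h
        · exact h
        · exfalso
          have : Real.cos (Real.arccos (p.1/R)) = Real.cos π := by rw [h]
          rw [Real.cos_arccos ha1 ha2, Real.cos_pi] at this
          have : p.1 = -R := by field_simp at this; linarith
          have : p.2 = 0 := by nlinarith [hRsq]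
          linarith
      linarith
    · have := Real.arccos_nonneg (p.1/R); linarith [Real.pi_pos]
    · rw [Real.cos_neg, Real.cos_arccos ha1 ha2]; field_simp
    · rw [Real.sin_neg, Real.sin_arccos, hsin, abs_of_neg hb]; field_simp

lemma LL_polar (n j : ℕ) {p : ℝ × ℝ} {R φ : ℝ}
    (h1 : p.1 = R * Real.cos φ) (h2 : p.2 = R * Real.sin φ) :
    LL n j p = R * Real.cos (th n j - φ) / Real.cos (ang n) := by
  unfold LL
  rw [h1, h2, Real.cos_sub]; ring

lemma cover {n : ℕ} (hn : 3 ≤ n) {φ : ℝ} (hφ1 : -π < φ) (hφ2 : φ ≤ π) :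
    ∃ j ∈ Finset.range (2*n), Real.cos (ang n) ≤ Real.cos (th n j - φ) := by
  have hπ := Real.pi_pos
  have hA := ang_pos hn
  have hA6 := ang_le hn
  set φ' := if 0 < φ then φ else φ + 2*π with hφ'def
  have hφ'1 : 0 < φ' := by unfold φ'; split <;> [skip; skip] <;> first | assumption | linarith
  have hφ'2 : φ' ≤ 2*π := by unfold φ'; split <;> linarith
  have hcoseq : ∀ x : ℝ, Real.cos (x - φ') = Real.cos (x - φ) := by
    intro x
    unfold φ'
    split
    · rfl
    · rw [show x - (φ + 2*π) = x - φ - 2*π by ring, Real.cos_sub_two_pi]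
  have key : ∃ j ∈ Finset.range (2*n), |th n j - φ'| ≤ ang n := by
    set m := ⌊φ' / (2 * ang n)⌋₊ with hmdef
    rcases le_or_gt m (2*n - 1) with hm | hm
    · refine ⟨m, Finset.mem_range.mpr (by omega), ?_⟩
      have hfl : (m:ℝ) ≤ φ' / (2 * ang n) := Nat.floor_le (by positivity)
      have hfu : φ' / (2 * ang n) < m + 1 := Nat.lt_floor_add_one _
      have h2A : (0:ℝ) < 2 * ang n := by linarith
      have hl : 2 * (m:ℝ) * ang n ≤ φ' := by
        have := (le_div_iff₀ h2A).mp hfl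
        nlinarith
      have hu : φ' < (2 * (m:ℝ) + 2) * ang n := by
        have := (div_lt_iff₀ h2A).mp hfu
        nlinarith
      rw [th_eq, abs_le]
      constructor <;> nlinarith
    · refine ⟨2*n - 1, Finset.mem_range.mpr (by omega), ?_⟩
      have hge : (2*n:ℝ) ≤ φ' / (2 * ang n) := by
        have : (2*n : ℕ) ≤ m := by omega
        calc (2*n:ℝ) = ((2*n : ℕ) : ℝ) := by push_cast; ring
          _ ≤ (m:ℝ) := by exact_mod_cast this
          _ ≤ φ' / (2 * ang n) := Nat.floor_le (by positivity)
      have h2A : (0:ℝ) < 2 * ang n := by linarith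
      have : 2*π ≤ φ' := by
        have := (le_div_iff₀ h2A).mp hge
        have h4 := four_n_ang hn
        push_cast at this ⊢
        nlinarith
      have hφeq : φ' = 2*π := le_antisymm hφ'2 this
      have hth : th n (2*n-1) = 2*π - ang n := by
        rw [th_eq]
        have hcast : ((2*n-1 : ℕ) : ℝ) = 2*(n:ℝ) - 1 := by
          push_cast [Nat.cast_sub (by omega : 1 ≤ 2*n)]; ring
        rw [hcast]
        have h4 := four_n_ang hn
        nlinarith [h4]
      rw [hth, hφeq, abs_le]
      constructor <;> nlinarith
  obtain ⟨j, hj, habs⟩ := key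
  refine ⟨j, hj, ?_⟩
  rw [← hcoseq]
  calc Real.cos (ang n) ≤ Real.cos |th n j - φ'| := by
        apply Real.cos_le_cos_of_nonneg_of_le_pi (abs_nonneg _) (by linarith) habs
    _ = Real.cos (th n j - φ') := Real.cos_abs _


/-- active facets are within `ang n` (in cosine form) -/
lemma act {n : ℕ} (hn : 3 ≤ n) {p : ℝ × ℝ} {R φ : ℝ} (hR : 0 < R)
    (hφ1 : -π < φ) (hφ2 : φ ≤ π)
    (h1 : p.1 = R * Real.cos φ) (h2 : p.2 = R * Real.sin φ)
    {j : ℕ} (hj : j ∈ Finset.range (2*n)) (hact : LL n j p = PP n p) :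
    Real.cos (ang n) ≤ Real.cos (th n j - φ) := by
  obtain ⟨j0, hj0, hcov⟩ := cover hn hφ1 hφ2
  have hC := cos_ang_pos hn
  have hle : LL n j0 p ≤ LL n j p := by

    rw [hact]; exact le_PP hn hj0 p
  rw [LL_polar n j h1 h2, LL_polar n j0 h1 h2] at hle
  have := (div_le_div_iff_of_pos_right hC).mp hle
  have h3 : Real.cos (ang n) * R ≤ Real.cos (th n j - φ) * R := by
    nlinarith
  exact le_of_mul_le_mul_right (by linarith) hR

lemma PP_pos {n : ℕ} (hn : 3 ≤ n) {p : ℝ × ℝ} (hp : p ≠ 0) : 0 < PP n p := by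
  obtain ⟨R, φ, hR, hφ1, hφ2, h1, h2⟩ := polar hp
  obtain ⟨j0, hj0, hcov⟩ := cover hn hφ1 hφ2
  have hC := cos_ang_pos hn
  have : R ≤ LL n j0 p := by
    rw [LL_polar n j0 h1 h2]
    rw [le_div_iff₀ hC]
    nlinarith
  have := le_PP hn hj0 p
  linarith

/-- if cos D ≥ cos α and D ∈ (-π, 3π) then D is within α of 0 or 2π -/
lemma narrow {n : ℕ} (hn : 3 ≤ n) {D : ℝ} (h1 : -π < D) (h2 : D < 3*π)
    (h3 : Real.cos (ang n) ≤ Real.cos D) :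
    |D| ≤ ang n ∨ |D - 2*π| ≤ ang n := by
  have hπ := Real.pi_pos
  have hA := ang_pos hn
  have hA6 := ang_le hn
  by_contra hcon
  push_neg at hcon
  obtain ⟨hd1, hd2⟩ := hcon
  have : Real.cos D < Real.cos (ang n) := by
    rcases le_or_gt D 0 with h | h
    · have : ang n < -D := by rw [abs_of_nonpos h] at hd1; linarith
      calc Real.cos D = Real.cos (-D) := (Real.cos_neg D).symm
        _ < Real.cos (ang n) := Real.cos_lt_cos_of_nonneg_of_le_pi hA.le (by linarith) this
    · rcases le_or_gt D π with h' | h'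
      · have : ang n < D := by rw [abs_of_pos h] at hd1; linarith
        exact Real.cos_lt_cos_of_nonneg_of_le_pi hA.le h' this
      · rcases le_or_gt D (2*π) with h'' | h''
        · have : ang n < 2*π - D := by
            rw [abs_of_nonpos (by linarith)] at hd2; linarith
          calc Real.cos D = Real.cos (2*π - D) := (Real.cos_two_pi_sub D).symm
            _ < Real.cos (ang n) :=
              Real.cos_lt_cos_of_nonneg_of_le_pi hA.le (by linarith) this
        · have : ang n < D - 2*π := by
            rw [abs_of_pos (by linarith)] at hd2; linarith
          calc Real.cos D = Real.cos (D - 2*π) := (Real.cos_sub_two_pi D).symm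
            _ < Real.cos (ang n) :=
              Real.cos_lt_cos_of_nonneg_of_le_pi hA.le (by linarith) this
  linarith

/-- descent lemma: if all active functionals are negative on q, can decrease the norm -/
lemma descent {n : ℕ} (hn : 3 ≤ n) (p q : ℝ × ℝ)
    (h : ∀ j ∈ Finset.range (2*n), LL n j p = PP n p → LL n j q < 0) :
    ∃ l : ℝ, PP n (p + l • q) < PP n p := by
  set g : ℕ → ℝ := fun j => if LL n j q < 0 then 1 else (PP n p - LL n j p)/(LL n j q + 1)
    with hg
  have hgpos : ∀ j ∈ Finset.range (2*n), 0 < g j := by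
    intro j hj
    rw [hg]
    dsimp only
    split
    · norm_num
    · rename_i hq
      push_neg at hq
      have hlt : LL n j p < PP n p := by
        rcases lt_or_eq_of_le (le_PP hn hj p) with h' | h'
        · exact h'
        · exact absurd (h j hj h') (by linarith)
      have hpos1 : (0:ℝ) < LL n j q + 1 := by linarith
      exact div_pos (by linarith) hpos1
  set l := (Finset.range (2*n)).inf' (range_ne n hn) g with hl
  have hlpos : 0 < l := (Finset.lt_inf'_iff _).mpr hgpos
  refine ⟨l, ?_⟩
  rw [PP_eq hn, Finset.sup'_lt_iff]
  intro j hj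
  rw [LL_add_smul]
  rcases lt_or_ge (LL n j q) 0 with hq | hq
  · have : l * LL n j q < 0 := mul_neg_of_pos_of_neg hlpos hq
    have := le_PP hn hj p
    linarith
  · have hgj : g j = (PP n p - LL n j p)/(LL n j q + 1) := by
      rw [hg]; dsimp only; rw [if_neg (not_lt.mpr hq)]
    have hlle : l ≤ g j := Finset.inf'_le g hj
    have hlt : LL n j p < PP n p := by
      rcases lt_or_eq_of_le (le_PP hn hj p) with h' | h'
      · exact h'
      · exact absurd (h j hj h') (by linarith)
    have hpos : (0:ℝ) < LL n j q + 1 := by linarith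
    have : l * LL n j q ≤ g j * LL n j q := mul_le_mul_of_nonneg_right hlle hq
    have h2 : g j * LL n j q < PP n p - LL n j p := by
      rw [hgj, div_mul_eq_mul_div, div_lt_iff₀ hpos]
      nlinarith
    linarith

/-- the crucial 2D lemma: a common decrease direction (up to sign) for two nonzero
planar vectors -/
lemma cross {n : ℕ} (hn : 3 ≤ n) {p0 p1 : ℝ × ℝ} (h0 : p0 ≠ 0) (h1 : p1 ≠ 0) :
    ∃ q : ℝ × ℝ, (∃ l : ℝ, PP n (p0 + l • q) < PP n p0) ∧
      (∃ m : ℝ, PP n (p1 + m • q) < PP n p1) := by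
  have hπ := Real.pi_pos
  have hA := ang_pos hn
  have hA6 := ang_le hn
  have hC := cos_ang_pos hn
  obtain ⟨R0, φ0, hR0, hφ01, hφ02, hp01, hp02⟩ := polar h0
  obtain ⟨R1, φ1, hR1, hφ11, hφ12, hp11, hp12⟩ := polar h1
  set Δ := φ1 - φ0 with hΔ
  set k := round (Δ / π) with hk
  set t := Δ - k * π with ht
  have htb : |t| ≤ π/2 := by
    have h := abs_sub_round (Δ / π)
    have : t = (Δ/π - k) * π := by rw [ht]; field_simp
    rw [this, abs_mul, abs_of_pos hπ]
    nlinarith [abs_nonneg (Δ/π - (k:ℝ))]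
  set ψ := φ0 + π + t/2 with hψ
  set q : ℝ × ℝ := (Real.cos ψ, Real.sin ψ) with hq
  have hLLq : ∀ j, LL n j q = Real.cos (th n j - ψ) / Real.cos (ang n) := by
    intro j
    unfold LL
    rw [hq, Real.cos_sub]
  -- the two ranges of active angles
  have hDrange : ∀ j : ℕ, j ∈ Finset.range (2*n) → ∀ φ : ℝ, -π < φ → φ ≤ π →
      -π < th n j - φ ∧ th n j - φ < 3*π := by
    intro j hj φ hh1 hh2
    have := th_pos hn j
    have := th_lt hn (Finset.mem_range.mp hj)
    constructor <;> linarith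
  -- claim A : all functionals active at p0 are negative on q
  have claimA : ∀ j ∈ Finset.range (2*n), LL n j p0 = PP n p0 → LL n j q < 0 := by
    intro j hj hact
    have hcos := act hn hR0 hφ01 hφ02 hp01 hp02 hj hact
    obtain ⟨hr1, hr2⟩ := hDrange j hj φ0 hφ01 hφ02
    rcases narrow hn hr1 hr2 hcos with hD | hD
    · have hpos : 0 < Real.cos (th n j - φ0 - t/2) := by
        apply Real.cos_pos_of_mem_Ioo
        constructor
        · rcases abs_le.mp hD with ⟨hx, _⟩
          rcases abs_le.mp htb with ⟨hy, _⟩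
          nlinarith
        · rcases abs_le.mp hD with ⟨_, hx⟩
          rcases abs_le.mp htb with ⟨_, hy⟩
          nlinarith
      have heq : th n j - ψ = (th n j - φ0 - t/2) - π := by rw [hψ]; ring
      rw [hLLq, heq, Real.cos_sub_pi]
      apply div_neg_of_neg_of_pos (by linarith) hC
    · have hpos : 0 < Real.cos (th n j - 2*π - φ0 - t/2) := by
        apply Real.cos_pos_of_mem_Ioo
        constructor
        · rcases abs_le.mp hD with ⟨hx, _⟩
          rcases abs_le.mp htb with ⟨hy, _⟩
          nlinarith
        · rcases abs_le.mp hD with ⟨_, hx⟩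
          rcases abs_le.mp htb with ⟨_, hy⟩
          nlinarith
      have heq : th n j - ψ = ((th n j - 2*π - φ0 - t/2) - π) + (1:ℤ) * (2*π) := by
        push_cast; rw [hψ]; ring
      rw [hLLq, heq, Real.cos_add_int_mul_two_pi, Real.cos_sub_pi]
      apply div_neg_of_neg_of_pos (by linarith) hC
  -- claim B : all functionals active at p1 have the same sign ((-1)^(k-1)) on q
  have claimB : ∀ j ∈ Finset.range (2*n), LL n j p1 = PP n p1 →
      ∃ D' : ℝ, |D'| ≤ ang n ∧ ∃ m' : ℤ, th n j - ψ = (D' + t/2 + ((k:ℝ)-1) * π) + (m' : ℝ) * (2*π) := by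
    intro j hj hact
    have hcos := act hn hR1 hφ11 hφ12 hp11 hp12 hj hact
    obtain ⟨hr1, hr2⟩ := hDrange j hj φ1 hφ11 hφ12
    have hΔeq : φ1 - φ0 = k * π + t := by rw [ht]; ring
    rcases narrow hn hr1 hr2 hcos with hD | hD
    · refine ⟨th n j - φ1, hD, 0, ?_⟩
      push_cast
      rw [hψ]
      have : φ0 = φ1 - (k*π + t) := by linarith [hΔeq]
      rw [this]; ring
    · refine ⟨th n j - φ1 - 2*π, hD, 1, ?_⟩
      push_cast
      rw [hψ]
      have : φ0 = φ1 - (k*π + t) := by linarith [hΔeq]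
      rw [this]; ring
  -- now split on parity of k
  have hcos_pos : ∀ D' : ℝ, |D'| ≤ ang n → 0 < Real.cos (D' + t/2) := by
    intro D' hD'
    apply Real.cos_pos_of_mem_Ioo
    rcases abs_le.mp hD' with ⟨hx1, hx2⟩
    rcases abs_le.mp htb with ⟨hy1, hy2⟩
    constructor <;> nlinarith
  rcases Int.even_or_odd k with ⟨mk, hmk⟩ | ⟨mk, hmk⟩
  · -- k even: LL j q < 0 on actives of p1 as well; use q for both
    refine ⟨q, descent hn p0 q claimA, descent hn p1 q ?_⟩
    intro j hj hact
    obtain ⟨D', hD', m', heq⟩ := claimB j hj hact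
    have heq2 : th n j - ψ = ((D' + t/2) - π) + ((m' + mk : ℤ) : ℝ) * (2*π) := by
      rw [heq, hmk]; push_cast; ring
    rw [hLLq, heq2, Real.cos_add_int_mul_two_pi, Real.cos_sub_pi]
    exact div_neg_of_neg_of_pos (by linarith [hcos_pos D' hD']) hC
  · -- k odd: LL j q > 0 on actives of p1; use -q for p1
    refine ⟨q, descent hn p0 q claimA, ?_⟩
    have hdesc : ∀ j ∈ Finset.range (2*n), LL n j p1 = PP n p1 → LL n j (-q) < 0 := by
      intro j hj hact
      obtain ⟨D', hD', m', heq⟩ := claimB j hj hact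
      have heq2 : th n j - ψ = (D' + t/2) + ((m' + mk : ℤ) : ℝ) * (2*π) := by
        rw [heq, hmk]; push_cast; ring
      rw [LL_neg, hLLq, heq2, Real.cos_add_int_mul_two_pi]
      linarith [div_pos (hcos_pos D' hD') hC]
    obtain ⟨l, hl⟩ := descent hn p1 (-q) hdesc
    refine ⟨-l, ?_⟩
    rw [show (-l) • q = l • (-q) by simp]
    exact hl


lemma half_ang {n : ℕ} (hn : 3 ≤ n) : 2*(n:ℝ) * ang n = π := by
  have h := four_n_ang hn; linarith

/-- for any sign pattern there is another facet direction realizing it -/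
lemma signIdx {n : ℕ} (hn : 3 ≤ n) {j : ℕ} (hj : j < 2*n) (a b : ℝ) :
    ∃ j' ∈ Finset.range (2*n),
      Real.cos (th n j') * a + Real.sin (th n j') * b =
        |Real.cos (th n j)| * |a| + |Real.sin (th n j)| * |b| := by
  have h2 := half_ang hn
  have h4 := four_n_ang hn
  set c := Real.cos (th n j) with hc
  set s := Real.sin (th n j) with hs
  have habs1 : |c| * |a| = |c * a| := (abs_mul c a).symm
  have habs2 : |s| * |b| = |s * b| := (abs_mul s b).symm
  rcases le_or_gt 0 (c*a) with h1 | h1 <;> rcases le_or_gt 0 (s*b) with hb1 | hb1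
  · exact ⟨j, Finset.mem_range.mpr hj, by
      rw [habs1, habs2, abs_of_nonneg h1, abs_of_nonneg hb1]⟩
  · refine ⟨2*n - 1 - j, Finset.mem_range.mpr (by omega), ?_⟩
    have hcast : ((2*n - 1 - j : ℕ) : ℝ) = 2*(n:ℝ) - 1 - j := by
      have hh : (2*n - 1 - j) + (j+1) = 2*n := by omega
      have := congrArg (fun m : ℕ => (m:ℝ)) hh
      push_cast at this; linarith
    have hth : th n (2*n - 1 - j) = 2*π - th n j := by
      rw [th_eq, th_eq, hcast]
      linear_combination h4
    rw [hth, Real.cos_two_pi_sub, Real.sin_two_pi_sub]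
    rw [habs1, habs2, abs_of_nonneg h1, abs_of_neg hb1]
    ring
  · rcases lt_or_ge j n with hjn | hjn
    · refine ⟨n - 1 - j, Finset.mem_range.mpr (by omega), ?_⟩
      have hcast : ((n - 1 - j : ℕ) : ℝ) = (n:ℝ) - 1 - j := by
        have hh : (n - 1 - j) + (j+1) = n := by omega
        have := congrArg (fun m : ℕ => (m:ℝ)) hh
        push_cast at this; linarith
      have hth : th n (n - 1 - j) = π - th n j := by
        rw [th_eq, th_eq, hcast]
        linear_combination h2
      rw [hth, Real.cos_pi_sub, Real.sin_pi_sub]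
      rw [habs1, habs2, abs_of_neg h1, abs_of_nonneg hb1]
      ring
    · refine ⟨3*n - 1 - j, Finset.mem_range.mpr (by omega), ?_⟩
      have hcast : ((3*n - 1 - j : ℕ) : ℝ) = 3*(n:ℝ) - 1 - j := by
        have hh : (3*n - 1 - j) + (j+1) = 3*n := by omega
        have := congrArg (fun m : ℕ => (m:ℝ)) hh
        push_cast at this; linarith
      have hth : th n (3*n - 1 - j) = (π - th n j) + (1:ℤ) * (2*π) := by
        rw [th_eq, th_eq, hcast]
        push_cast
        linear_combination 3*h2
      rw [hth, Real.cos_add_int_mul_two_pi, Real.sin_add_int_mul_two_pi,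
        Real.cos_pi_sub, Real.sin_pi_sub]
      rw [habs1, habs2, abs_of_neg h1, abs_of_nonneg hb1]
      ring
  · refine ⟨tau n j, Finset.mem_range.mpr (tau_mem hn hj), ?_⟩
    obtain ⟨hco, hso⟩ := th_tau hn hj
    rw [hco, hso, habs1, habs2, abs_of_neg h1, abs_of_neg hb1]
    ring

/-- the abs-version sup equals the linear-version sup -/
lemma SL_eq {n : ℕ} (hn : 3 ≤ n) (H : (Finset.range (2*n)).Nonempty) (a b : ℝ) :
    (Finset.range (2*n)).sup' H
      (fun j => (|Real.cos (th n j)| * |a| + |Real.sin (th n j)| * |b|) / Real.cos (ang n))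
    = PP n (a, b) := by
  have hC := cos_ang_pos hn
  apply le_antisymm
  · apply Finset.sup'_le
    intro j hj
    obtain ⟨j', hj', hval⟩ := signIdx hn (Finset.mem_range.mp hj) a b
    have : (|Real.cos (th n j)| * |a| + |Real.sin (th n j)| * |b|) / Real.cos (ang n)
        = LL n j' (a, b) := by
      unfold LL; rw [hval]
    rw [this]
    exact le_PP hn hj' _
  · rw [PP_eq hn]
    apply Finset.sup'_le
    intro j hj
    have hnum : Real.cos (th n j) * a + Real.sin (th n j) * b ≤
        |Real.cos (th n j)| * |a| + |Real.sin (th n j)| * |b| := by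
      have e1 : Real.cos (th n j) * a ≤ |Real.cos (th n j) * a| := le_abs_self _
      have e2 : Real.sin (th n j) * b ≤ |Real.sin (th n j) * b| := le_abs_self _
      rw [abs_mul] at e1 e2
      linarith
    have hfin : LL n j (a, b) ≤
        (|Real.cos (th n j)| * |a| + |Real.sin (th n j)| * |b|) / Real.cos (ang n) := by
      unfold LL
      exact (div_le_div_iff_of_pos_right hC).mpr hnum
    exact hfin.trans (Finset.le_sup'
      (fun j => (|Real.cos (th n j)| * |a| + |Real.sin (th n j)| * |b|) / Real.cos (ang n)) hj)

lemma norm_formula {n : ℕ} (hn : 3 ≤ n) (H : (Finset.range (2*n)).Nonempty) (a b c : ℝ) :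
    (Finset.range (2*n)).sup'  H
      (fun j => max
        ((|Real.cos (th n j)| * |a| + |Real.sin (th n j)| * |b|) / Real.cos (ang n))
        ((|Real.cos (th n j)| * |a| + |Real.sin (th n j)| * |b|) / (2 * Real.cos (ang n))
          + |c| / 2))
    = max (PP n (a, b)) ((PP n (a, b) + |c|) / 2) := by
  have hC := cos_ang_pos hn
  set S : ℕ → ℝ :=
    fun j => (|Real.cos (th n j)| * |a| + |Real.sin (th n j)| * |b|) / Real.cos (ang n)
    with hSdef
  have hbody : ∀ j ∈ Finset.range (2*n),
      max ((|Real.cos (th n j)| * |a| + |Real.sin (th n j)| * |b|) / Real.cos (ang n))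
        ((|Real.cos (th n j)| * |a| + |Real.sin (th n j)| * |b|) / (2 * Real.cos (ang n))
          + |c| / 2)
      = max (S j) (S j / 2 + |c| / 2) := by
    intro j hj
    congr 1
    rw [hSdef]
    dsimp only
    rw [div_div, mul_comm (Real.cos (ang n)) 2]
  rw [Finset.sup'_congr H rfl hbody]
  have hSsup : (Finset.range (2*n)).sup' H S = PP n (a, b) := SL_eq hn H a b
  have main : (Finset.range (2*n)).sup' H (fun j => max (S j) (S j / 2 + |c| / 2))
      = max ((Finset.range (2*n)).sup' H S) (((Finset.range (2*n)).sup' H S) / 2 + |c| / 2) := by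
    apply le_antisymm
    · apply Finset.sup'_le
      intro j hj
      apply max_le_max
      · exact Finset.le_sup' S hj
      · have := Finset.le_sup' S hj
        linarith
    · apply max_le
      · apply Finset.sup'_le
        intro j hj
        exact (le_max_left _ _).trans
          (Finset.le_sup' (fun j => max (S j) (S j / 2 + |c| / 2)) hj)
      · obtain ⟨j0, hj0, hEq⟩ := Finset.exists_mem_eq_sup' H S
        rw [hEq]
        exact (le_max_right _ _).trans
          (Finset.le_sup' (fun j => max (S j) (S j / 2 + |c| / 2)) hj0)
  rw [main, hSsup]
  congr 1
  ring


/-- planar projection -/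
def pl (w : ℝ × ℝ × ℝ) : ℝ × ℝ := (w.1, w.2.1)

lemma pl_add_smul (u v : ℝ × ℝ × ℝ) (l : ℝ) : pl (u + l • v) = pl u + l • pl v := rfl

section Assembly

variable {X : Type*} [NormedAddCommGroup X] [NormedSpace ℝ X] {n : ℕ}

lemma norm_max (hn : 3 ≤ n) (e : X ≃ₗ[ℝ] ℝ × ℝ × ℝ)
    (hN : ∀ v : X, ‖v‖ = max (PP n (pl (e v))) ((PP n (pl (e v)) + |(e v).2.2|) / 2))
    (x y : X) (l : ℝ) :
    ‖x + l • y‖ = max (PP n (pl (e x) + l • pl (e y)))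
      ((PP n (pl (e x) + l • pl (e y)) + |(e x).2.2 + l * (e y).2.2|) / 2) := by
  rw [hN (x + l • y)]
  have h1 : e (x + l • y) = e x + l • e y := by
    rw [map_add, map_smul]
  rw [h1, pl_add_smul]
  have h2 : (e x + l • e y).2.2 = (e x).2.2 + l * (e y).2.2 := rfl
  rw [h2]

lemma unit_facts (hn : 3 ≤ n) (e : X ≃ₗ[ℝ] ℝ × ℝ × ℝ)
    (hN : ∀ v : X, ‖v‖ = max (PP n (pl (e v))) ((PP n (pl (e v)) + |(e v).2.2|) / 2))
    (x : X) (hx : ‖x‖ = 1) :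
    PP n (pl (e x)) ≤ 1 ∧ PP n (pl (e x)) + |(e x).2.2| ≤ 2 := by
  rw [hN x] at hx
  constructor
  · exact (le_max_left _ _).trans hx.le
  · have := (le_max_right _ _).trans hx.le
    linarith

lemma mixed (hn : 3 ≤ n) (e : X ≃ₗ[ℝ] ℝ × ℝ × ℝ)
    (hN : ∀ v : X, ‖v‖ = max (PP n (pl (e v))) ((PP n (pl (e v)) + |(e v).2.2|) / 2))
    (x0 x1 : X) (h0 : ‖x0‖ = 1) (h1 : ‖x1‖ = 1)
    (hp0 : pl (e x0) = 0) (hp1 : pl (e x1) ≠ 0) :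
    ∃ y : X, (∃ l : ℝ, ‖x0 + l • y‖ < 1) ∧ (∃ m : ℝ, ‖x1 + m • y‖ < 1) := by
  set p1 := pl (e x1) with hp1def
  set c0 := (e x0).2.2 with hc0def
  set c1 := (e x1).2.2 with hc1def
  set P1 := PP n p1 with hP1def
  have hP1pos : 0 < P1 := PP_pos hn hp1
  obtain ⟨hP1le, hsum1⟩ := unit_facts hn e hN x1 h1
  have hc0abs : |c0| = 2 := by
    have h := hN x0
    rw [h0, hp0, PP_zero] at h
    have hnn : (0:ℝ) ≤ (0 + |c0|) / 2 := by positivity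
    rw [max_eq_right hnn] at h
    have : (0 + |c0|) / 2 = 1 := h.symm
    linarith [this]
  set w : ℝ := if 0 ≤ c1 then -(P1 + 1) else (P1 + 1) with hwdef
  have hwabs : |w| = P1 + 1 := by
    rw [hwdef]; split
    · rw [abs_neg, abs_of_pos (by linarith)]
    · rw [abs_of_pos (by linarith)]
  have hwne : w ≠ 0 := by
    intro hcon
    rw [hcon, abs_zero] at hwabs
    linarith
  set y : X := e.symm (-p1.1, -p1.2, w) with hydef
  have hey : e y = (-p1.1, -p1.2, w) := e.apply_symm_apply _
  have hply : pl (e y) = -p1 := by rw [hey]; rfl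
  have heyz : (e y).2.2 = w := by rw [hey]
  refine ⟨y, ⟨-c0 / (2*w), ?_⟩, ⟨1/2, ?_⟩⟩
  · set l : ℝ := -c0 / (2*w) with hldef
    rw [norm_max hn e hN x0 y l, hply, hp0, heyz]
    have hpl : (0 : ℝ × ℝ) + l • (-p1) = (-l) • p1 := by
      rw [zero_add, smul_neg, neg_smul]
    rw [hpl, PP_smul_abs hn]
    have habsl : |(-l)| = 1 / (P1 + 1) := by
      rw [abs_neg, hldef, abs_div, abs_neg, hc0abs, abs_mul, hwabs,
        abs_of_nonneg (by norm_num : (0:ℝ) ≤ 2)]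
      have hne : (P1 + 1) ≠ 0 := by positivity
      field_simp
    have hz : c0 + l * w = c0 / 2 := by
      rw [hldef]
      field_simp
      ring
    rw [habsl, hz]
    have hcc : |c0 / 2| = 1 := by rw [abs_div, hc0abs]; norm_num
    rw [hcc]
    have hfrac : 1 / (P1+1) * P1 < 1 := by
      rw [div_mul_eq_mul_div, one_mul, div_lt_one (by linarith)]
      linarith
    apply max_lt hfrac
    linarith
  · rw [norm_max hn e hN x1 y (1/2), hply, heyz]
    have hpl : p1 + (1/2 : ℝ) • (-p1) = (1/2 : ℝ) • p1 := by
      rw [smul_neg]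
      have : p1 = (1 : ℝ) • p1 := (one_smul _ _).symm
      rw [this]
      rw [← sub_eq_add_neg, smul_smul, ← sub_smul]
      norm_num
    rw [hpl, PP_smul_abs hn, abs_of_pos (by norm_num : (0:ℝ) < 1/2)]
    have hb : |c1 + 1/2 * w| ≤ max |c1| ((P1+1)/2) := by
      have hM1 : |c1| ≤ max |c1| ((P1+1)/2) := le_max_left _ _
      have hM2 : (P1+1)/2 ≤ max |c1| ((P1+1)/2) := le_max_right _ _
      rw [hwdef]
      split
      · rename_i hcs
        rw [abs_le]
        constructor
        · have : -(|c1|) ≤ c1 := neg_abs_le c1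
          nlinarith
        · have : c1 ≤ |c1| := le_abs_self c1
          nlinarith
      · rename_i hcs
        push_neg at hcs
        rw [abs_le]
        constructor
        · have : -(|c1|) ≤ c1 := neg_abs_le c1
          nlinarith
        · have : c1 ≤ |c1| := le_abs_self c1
          nlinarith
    apply max_lt
    · linarith
    · rcases max_cases |c1| ((P1+1)/2) with ⟨hEq, _⟩ | ⟨hEq, _⟩ <;> rw [hEq] at hb
      · have : 1/2 * P1 + |c1| < P1 + |c1| := by linarith
        linarith
      · linarith

lemma key (hn : 3 ≤ n) (e : X ≃ₗ[ℝ] ℝ × ℝ × ℝ)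
    (hN : ∀ v : X, ‖v‖ = max (PP n (pl (e v))) ((PP n (pl (e v)) + |(e v).2.2|) / 2))
    (x0 x1 : X) (h0 : ‖x0‖ = 1) (h1 : ‖x1‖ = 1) :
    ∃ y : X, (∃ l : ℝ, ‖x0 + l • y‖ < 1) ∧ (∃ m : ℝ, ‖x1 + m • y‖ < 1) := by
  by_cases hp0 : pl (e x0) = 0 <;> by_cases hp1 : pl (e x1) = 0
  · -- both on the axis
    set y : X := e.symm (0, 0, 1) with hydef
    have hey : e y = (0, 0, 1) := e.apply_symm_apply _
    have hply : pl (e y) = 0 := by rw [hey]; rfl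
    have heyz : (e y).2.2 = 1 := by rw [hey]
    refine ⟨y, ⟨-(e x0).2.2, ?_⟩, ⟨-(e x1).2.2, ?_⟩⟩ <;>
      [rw [norm_max hn e hN x0 y _, hply, hp0]; rw [norm_max hn e hN x1 y _, hply, hp1]] <;>
      · rw [heyz, smul_zero, add_zero, PP_zero]
        simp
  · exact mixed hn e hN x0 x1 h0 h1 hp0 hp1
  · obtain ⟨y, hA, hB⟩ := mixed hn e hN x1 x0 h1 h0 hp1 hp0
    exact ⟨y, hB, hA⟩
  · obtain ⟨hP0le, hsum0⟩ := unit_facts hn e hN x0 h0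
    obtain ⟨hP1le, hsum1⟩ := unit_facts hn e hN x1 h1
    obtain ⟨q, ⟨l, hl⟩, ⟨m, hm⟩⟩ := cross hn hp0 hp1
    set y : X := e.symm (q.1, q.2, 0) with hydef
    have hey : e y = (q.1, q.2, 0) := e.apply_symm_apply _
    have hply : pl (e y) = q := by rw [hey]; rfl
    have heyz : (e y).2.2 = 0 := by rw [hey]
    refine ⟨y, ⟨l, ?_⟩, ⟨m, ?_⟩⟩
    · rw [norm_max hn e hN x0 y l, hply, heyz, mul_zero, add_zero]
      apply max_lt
      · linarith
      · linarith
    · rw [norm_max hn e hN x1 y m, hply, heyz, mul_zero, add_zero]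
      apply max_lt
      · linarith
      · linarith

end Assembly

end AuxP2

end Aux

/-- Let `n ≥ 3` and let `X` be `ℝ³` (identified via a linear equivalence `e`
with `ℝ × ℝ × ℝ`) with the norm
`‖(x,y,z)‖ = max_{0 ≤ j ≤ 2n−1} max{A_j, A_j/2 + |z|/2}` where
`A_j = (|cos((2j+1)π/2n)||x| + |sin((2j+1)π/2n)||y|)/cos(π/2n)` (unit ball: the prism with
pyramids glued on top and bottom, having the extra vertices `(0,0,±2)`).
Then `X` has Property `P_2`. -/
theorem stmt16 {X : Type*} [NormedAddCommGroup X] [NormedSpace ℝ X]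
    (n : ℕ) (hn : 3 ≤ n) (e : X ≃ₗ[ℝ] ℝ × ℝ × ℝ)
    (hnorm : ∀ v : X, ‖v‖ =
      (Finset.range (2 * n)).sup' (Finset.nonempty_range_iff.mpr (by omega))
        (fun j => max
          ((|Real.cos ((2 * (j : ℝ) + 1) * π / (2 * (n : ℝ)))| * |(e v).1| +
            |Real.sin ((2 * (j : ℝ) + 1) * π / (2 * (n : ℝ)))| * |(e v).2.1|) /
              Real.cos (π / (2 * (n : ℝ))))
          ((|Real.cos ((2 * (j : ℝ) + 1) * π / (2 * (n : ℝ)))| * |(e v).1| +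
            |Real.sin ((2 * (j : ℝ) + 1) * π / (2 * (n : ℝ)))| * |(e v).2.1|) /
              (2 * Real.cos (π / (2 * (n : ℝ)))) + |(e v).2.2| / 2))) :
    PropertyP X 2 := by
  have hN : ∀ v : X, ‖v‖ = max (PP n (pl (e v))) ((PP n (pl (e v)) + |(e v).2.2|) / 2) := by
    intro v
    rw [hnorm v]
    exact norm_formula hn (Finset.nonempty_range_iff.mpr (by omega)) (e v).1 (e v).2.1 (e v).2.2
  intro x hx huniv
  obtain ⟨y, ⟨l, hl⟩, ⟨m, hm⟩⟩ := key hn e hN (x 0) (x 1) (hx 0) (hx 1)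
  have hy : y ∈ ⋃ i, {y : X | BJOrth (x i) y} := by rw [huniv]; trivial
  rw [Set.mem_iUnion] at hy
  obtain ⟨i, hi⟩ := hy
  simp only [Set.mem_setOf_eq] at hi
  fin_cases i
  · have h : ‖x 0‖ ≤ ‖x 0 + l • y‖ := hi l
    rw [hx 0] at h
    linarith
  · have h : ‖x 1‖ ≤ ‖x 1 + m • y‖ := hi m
    rw [hx 1] at h
    linarith
end
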